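/- arXiv:2306.11186 — 7 statements merged into one kernel-verified Lean document; each statement's English description precedes it below -/
import Mathlib

section
/- Let (C, d) be a based cochain complex over an additive category, i.e. each chain space C^i is a finite biproduct ⊕_{j∈J_i} C^i_j, and let M be a Morse matching on C. Then the directed graph G(C, M) contains no directed cycle if and only if it contains no zig-zag cycle, i.e. no cycle of the form z_1 ↗ x_1 ↘ z_2 ↗ ⋯ ↗ x_n ↘ z_1 alternating between two neighbouring homological degrees. -/
/-!
STATEMENT 2: For a based cochain complex `(C, d)` over an additive category with a finite
partial matching `M` of matrix-element arrows, all of whose arrows are isomorphisms, the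
directed graph `G(C, M)` (vertices: cells; edges: nonzero matrix elements, with arrows of
`M` reversed) contains no directed cycle if and only if it contains no zig-zag cycle
(a cycle alternating between two neighbouring homological degrees).
-/

open CategoryTheory

namespace Stmt2

universe v u

variable (𝒞 : Type u) [Category.{v} 𝒞] [Preadditive 𝒞]

/-- A based cochain complex over an additive category: each chain space is a finite
biproduct of cells, encoded by its index sets, cells and matrix elements. -/
structure BasedComplex where
  /-- index set of the cells in homological degree `i` -/
  J : ℤ → Type
  /-- each chain space is a *finite* biproduct of cells -/
  fin : ∀ i, Fintype (J i)
  /-- only finitely many chain spaces are nonzero -/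
  bdd : ∃ N : ℕ, ∀ i : ℤ, (N : ℤ) < |i| → IsEmpty (J i)
  /-- the cells -/
  cell : ∀ i, J i → 𝒞
  /-- the matrix elements of the differential -/
  d : ∀ i, (j : J i) → (k : J (i + 1)) → (cell i j ⟶ cell (i + 1) k)
  /-- `d ∘ d = 0`, expressed on matrix elements -/
  dsq : ∀ i (j : J i) (l : J (i + 1 + 1)),
    ∑ᶠ k : J (i + 1), d i j k ≫ d (i + 1) k l = 0

attribute [instance] BasedComplex.fin

variable {𝒞}

/-- The vertices of the graph `G(C, M)`: the cells of `C`. -/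
def Vert (C : BasedComplex 𝒞) : Type := Σ i : ℤ, C.J i

/-- A matching datum: a set of matrix-element arrows (from degree `i` to degree `i+1`). -/
abbrev MatchingData (C : BasedComplex 𝒞) : Type := Set (Σ i : ℤ, C.J i × C.J (i + 1))

/-- The source cell of a matrix-element arrow. -/
def src {C : BasedComplex 𝒞} (m : Σ i : ℤ, C.J i × C.J (i + 1)) : Vert C := ⟨m.1, m.2.1⟩

/-- The target cell of a matrix-element arrow. -/
def tgt {C : BasedComplex 𝒞} (m : Σ i : ℤ, C.J i × C.J (i + 1)) : Vert C :=
  ⟨m.1 + 1, m.2.2⟩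

/-- `M` induces a partial matching: no cell is touched by two arrows of `M`. -/
def IsPartialMatching (C : BasedComplex 𝒞) (M : MatchingData C) : Prop :=
  ∀ m ∈ M, ∀ m' ∈ M, m ≠ m' →
    src m ≠ src m' ∧ src m ≠ tgt m' ∧ tgt m ≠ src m' ∧ tgt m ≠ tgt m'

/-- All arrows of `M` are isomorphisms. -/
def AllIso (C : BasedComplex 𝒞) (M : MatchingData C) : Prop :=
  ∀ m ∈ M, IsIso (C.d m.1 m.2.1 m.2.2)

/-- The edge relation of the graph `G(C, M)`: nonzero matrix elements, with the arrows of
`M` reversed. -/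
def GEdge (C : BasedComplex 𝒞) (M : MatchingData C) : Vert C → Vert C → Prop :=
  fun v w =>
    (∃ (i : ℤ) (j : C.J i) (k : C.J (i + 1)),
      v = ⟨i, j⟩ ∧ w = ⟨i + 1, k⟩ ∧ C.d i j k ≠ 0 ∧ ⟨i, (j, k)⟩ ∉ M) ∨
    (∃ (i : ℤ) (j : C.J i) (k : C.J (i + 1)),
      v = ⟨i + 1, k⟩ ∧ w = ⟨i, j⟩ ∧ ⟨i, (j, k)⟩ ∈ M)

/-- A directed cycle. -/
def HasCycle {V : Type*} (E : V → V → Prop) : Prop :=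
  ∃ (n : ℕ) (f : ℕ → V), 0 < n ∧ f n = f 0 ∧ ∀ t < n, E (f t) (f (t + 1))

/-- A zig-zag cycle: a directed cycle all of whose vertices lie in two neighbouring
homological degrees `i`, `i+1`. -/
def HasZigZagCycle (C : BasedComplex 𝒞) (M : MatchingData C) : Prop :=
  ∃ (i : ℤ) (n : ℕ) (f : ℕ → Vert C), 0 < n ∧ f n = f 0 ∧
    (∀ t < n, GEdge C M (f t) (f (t + 1))) ∧
    ∀ t ≤ n, (f t).1 = i ∨ (f t).1 = i + 1

theorem cycle_to_zigzag {C : BasedComplex 𝒞} {M : MatchingData C}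
    (hpm : IsPartialMatching C M) (h : HasCycle (GEdge C M)) :
    HasZigZagCycle C M := by
  obtain ⟨n, f, hn, hcyc, hE⟩ := h
  -- periodic extension
  set F : ℕ → Vert C := fun t => f (t % n) with hF
  have hFE : ∀ t, GEdge C M (F t) (F (t + 1)) := by
    intro t
    have h1 : t % n < n := Nat.mod_lt _ hn
    have h2 : F (t + 1) = f (t % n + 1) := by
      have hmod : (t + 1) % n = (t % n + 1) % n := (Nat.mod_add_mod t n 1).symm
      by_cases hlt : t % n + 1 < n
      · simp [hF, hmod, Nat.mod_eq_of_lt hlt]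
      · have heq : t % n + 1 = n := by omega
        simp [hF, hmod, heq, Nat.mod_self, ← hcyc]
    rw [show F t = f (t % n) from rfl, h2]
    exact hE _ h1
  -- max degree
  set S : Finset ℤ := (Finset.range n).image (fun s => (f s).1) with hS
  have hSne : S.Nonempty := by
    refine ⟨(f 0).1, ?_⟩
    simp [hS]
    exact ⟨0, hn, rfl⟩
  set i1 : ℤ := S.max' hSne with hi1
  obtain ⟨t₀, ht₀n, ht₀⟩ : ∃ s, s < n ∧ (f s).1 = i1 := by
    have hmem : S.max' hSne ∈ S := S.max'_mem hSne
    obtain ⟨s, hs, hseq⟩ := Finset.mem_image.mp hmem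
    exact ⟨s, Finset.mem_range.mp hs, hseq⟩
  set g : ℕ → Vert C := fun t => F (t₀ + t) with hg
  have hgE : ∀ t, GEdge C M (g t) (g (t + 1)) := fun t => hFE (t₀ + t)
  have hbound : ∀ t, (g t).1 ≤ i1 := by
    intro t
    apply S.le_max' _
    rw [hS]
    exact Finset.mem_image.mpr ⟨(t₀ + t) % n, Finset.mem_range.mpr (Nat.mod_lt _ hn), rfl⟩
  have hg0 : (g 0).1 = i1 := by
    have : g 0 = f t₀ := by
      simp [hg, hF, Nat.mod_eq_of_lt ht₀n]
    rw [this, ht₀]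
  have gcyc : g n = g 0 := by
    have h1 : (t₀ + n) % n = t₀ % n := Nat.add_mod_right t₀ n
    simp [hg, hF, h1]
  have main : ∀ t, (g t).1 = i1 ∨ ((g t).1 + 1 = i1 ∧ ∃ m ∈ M, src m = g t) := by
    intro t
    induction t with
    | zero => exact Or.inl hg0
    | succ t ih =>
      rcases hgE t with ⟨i, j, k, hv, hw, -, -⟩ | ⟨i, j, k, hv, hw, hm⟩
      · -- up edge
        have hvt : (g t).1 = i := by rw [hv]
        have hwt : (g (t + 1)).1 = i + 1 := by rw [hw]
        rcases ih with h1 | ⟨h1, -⟩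
        · exfalso
          have := hbound (t + 1)
          omega
        · left; omega
      · -- down edge
        have hvt : (g t).1 = i + 1 := by rw [hv]
        have hwt : (g (t + 1)).1 = i := by rw [hw]
        rcases ih with h1 | ⟨h1, m, hmM, hms⟩
        · right
          refine ⟨by omega, ⟨i, (j, k)⟩, hm, ?_⟩
          rw [hw]; rfl
        · exfalso
          have hne : m ≠ ⟨i, (j, k)⟩ := by
            intro hh
            have hm2 : m.1 = i := by rw [hh]
            have hm1 : m.1 = (g t).1 := by rw [← hms]; rfl
            omega
          have hsr := (hpm m hmM ⟨i, (j, k)⟩ hm hne).2.1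
          apply hsr
          rw [hms, hv]; rfl
  refine ⟨i1 - 1, n, g, hn, gcyc, fun t _ => hgE t, fun t _ => ?_⟩
  rcases main t with h1 | ⟨h1, -⟩ <;> omega

theorem stmt2 (C : BasedComplex 𝒞) (M : MatchingData C)
    (hfin : M.Finite) (hpm : IsPartialMatching C M) (hiso : AllIso C M) :
    ¬ HasCycle (GEdge C M) ↔ ¬ HasZigZagCycle C M := by
  constructor
  · intro hnc hz
    obtain ⟨i, n, f, hn, hcyc, hE, -⟩ := hz
    exact hnc ⟨n, f, hn, hcyc, hE⟩
  · intro hnz hc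
    exact hnz (cycle_to_zigzag hpm hc)

end Stmt2
end

section
/- If a directed graph G on a finite vertex set admits a function h to the integers such that every edge either strictly increases h, or is one of a distinguished set M of edges each of which decreases h by exactly 1, where M is a partial matching and there is a strict preorder ≺ on M such that along any zig-zag path x ↘ z ↗ x' ↘ z' (with the downward edges being reversals of matched edges) the matched edge at z strictly precedes the matched edge at z' under ≺, then G has no directed cycles. -/
/-!
STATEMENT 3: Abstract acyclicity principle for Morse matchings.
A directed graph on a finite vertex set with a height function `h : V → ℤ` such that every
edge either strictly increases `h` or is the reversal of a matched pair in `M` (which goes up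
by exactly 1, so the edge decreases `h` by exactly 1), where `M` is a partial matching and
there is a strict preorder `≺` on `M` increasing along zig-zag paths
`x ↘ z ↗ x' ↘ z'`, has no directed cycles.
-/

/-- A directed cycle in the relation `E`. -/
def HasCycle {V : Type*} (E : V → V → Prop) : Prop :=
  ∃ (n : ℕ) (f : ℕ → V), 0 < n ∧ f n = f 0 ∧ ∀ t < n, E (f t) (f (t + 1))

theorem stmt3 {V : Type*} [Finite V] (E : V → V → Prop) (h : V → ℤ)
    (M : Set (V × V))
    -- each matched pair `(z, x)` goes up exactly one level
    (hM : ∀ p ∈ M, h p.2 = h p.1 + 1)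
    -- every edge strictly increases `h`, or is the (descending) reversal of a matched pair
    (hE : ∀ u v, E u v → h u < h v ∨ (v, u) ∈ M)
    -- `M` is a partial matching: distinct matched pairs share no vertex
    (hmatch : ∀ p ∈ M, ∀ q ∈ M, p ≠ q →
      p.1 ≠ q.1 ∧ p.1 ≠ q.2 ∧ p.2 ≠ q.1 ∧ p.2 ≠ q.2)
    -- a strict preorder on `M` ...
    (prec : V × V → V × V → Prop)
    (hirrefl : ∀ p ∈ M, ¬ prec p p)
    (htrans : ∀ p q r, prec p q → prec q r → prec p r)
    -- ... which strictly increases along zig-zag paths `x ↘ z ↗ x' ↘ z'`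
    (hzig : ∀ x z x' z', E x z → (z, x) ∈ M → E z x' → h z < h x' →
      E x' z' → (z', x') ∈ M → prec (z, x) (z', x')) :
    ¬ HasCycle E := by
  classical
  rintro ⟨n, f, hn, hfn, hf⟩
  set g : ℕ → V := fun t => f (t % n) with hg
  have gper : ∀ t, g (t + n) = g t := by
    intro t; simp [hg, Nat.add_mod_right]
  have g0 : g n = g 0 := by
    show f (n % n) = f (0 % n)
    rw [Nat.mod_self, Nat.zero_mod]
  have gsucc : ∀ t, g (t + 1) = f (t % n + 1) := by
    intro t
    have hr : t % n < n := Nat.mod_lt _ hn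
    have key : (t + 1) % n = (t % n + 1) % n := by
      conv_lhs => rw [show t + 1 = t % n + 1 + n * (t / n) by
        have := Nat.div_add_mod t n; omega]
      exact Nat.add_mul_mod_self_left _ _ _
    by_cases hc : t % n + 1 < n
    · simp [hg, key, Nat.mod_eq_of_lt hc]
    · have hceq : t % n + 1 = n := by omega
      rw [hceq] at key ⊢
      simp [hg, key, Nat.mod_self, hfn]
  have gE : ∀ t, E (g t) (g (t + 1)) := by
    intro t
    rw [gsucc t]
    exact hf (t % n) (Nat.mod_lt _ hn)
  set Dn : ℕ → Prop := fun t => (g (t + 1), g t) ∈ M with hDn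
  set d : ℕ → ℤ := fun t => if Dn t then 1 else 0 with hd
  set φ : ℕ → ℤ := fun t => h (g t) - d t with hφ
  -- step facts
  have S1 : ∀ t, Dn t → h (g (t + 1)) = h (g t) - 1 := by
    intro t ht
    have h1 : h (g t) = h (g (t + 1)) + 1 := hM _ ht
    omega
  have S2 : ∀ t, ¬ Dn t → h (g t) < h (g (t + 1)) := by
    intro t ht
    rcases hE _ _ (gE t) with h1 | h1
    · exact h1
    · exact absurd h1 ht
  have S3 : ∀ t, Dn t → ¬ Dn (t + 1) := by
    intro t ht ht'
    by_cases hpq : ((g (t + 1), g t) : V × V) = (g (t + 2), g (t + 1))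
    · have h1 : g t = g (t + 1) := (Prod.mk.injEq _ _ _ _ ▸ hpq).2
      have h2 : h (g t) = h (g (t + 1)) + 1 := hM _ ht
      rw [← h1] at h2
      omega
    · have := (hmatch _ ht _ ht' hpq).2.1
      exact this rfl
  -- Dn is periodic
  have Dper : ∀ t, Dn (t + n) ↔ Dn t := by
    intro t
    have h1 : g (t + n + 1) = g (t + 1) := by
      rw [show t + n + 1 = (t + 1) + n by ring, gper]
    rw [hDn]
    simp only [h1, gper]
  -- φ is nondecreasing
  have mono : ∀ t, φ t ≤ φ (t + 1) := by
    intro t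
    by_cases ht : Dn t
    · have h1 := S1 t ht
      have h2 : d t = 1 := if_pos ht
      have h3 : d (t + 1) = 0 := if_neg (S3 t ht)
      simp only [hφ]
      omega
    · have h1 := S2 t ht
      have h2 : d t = 0 := if_neg ht
      have h3 : d (t + 1) ≤ 1 := by
        by_cases hc : Dn (t + 1) <;> simp [hd, hc]
      simp only [hφ]
      omega
  have monoLe : ∀ s t, s ≤ t → φ s ≤ φ t := by
    intro s t hst
    induction t with
    | zero => simp_all
    | succ t ih =>
      rcases Nat.lt_or_ge s (t + 1) with hlt | hge
      · exact le_trans (ih (by omega)) (mono t)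
      · have : s = t + 1 := by omega
        rw [this]
  -- φ is periodic, hence constant step-by-step
  have φper : ∀ t, φ (t + n) = φ t := by
    intro t
    simp only [hφ, hd, gper, Dper]
  have φconst : ∀ t, φ (t + 1) = φ t := by
    intro t
    have h1 : φ (t + 1) ≤ φ (t + n) := monoLe _ _ (by omega)
    have h2 := mono t
    have h3 := φper t
    omega
  -- after an up step comes a down step
  have C : ∀ t, ¬ Dn t → Dn (t + 1) := by
    intro t ht
    by_contra ht'
    have h1 := φconst t
    have h2 : d t = 0 := if_neg ht
    have h3 : d (t + 1) = 0 := if_neg ht'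
    have h4 := S2 t ht
    simp only [hφ] at h1
    omega
  have step2 : ∀ t, Dn t → Dn (t + 2) := fun t ht => C _ (S3 t ht)
  -- there exists a down step
  have exD : ∃ t, Dn t := by
    by_contra hall
    push_neg at hall
    have : StrictMono fun t => h (g t) := strictMono_nat_of_lt_succ fun t => S2 t (hall t)
    have h2 : h (g 0) < h (g n) := this hn
    rw [g0] at h2
    exact lt_irrefl _ h2
  obtain ⟨t0, ht0⟩ := exD
  set P : ℕ → V × V := fun t => (g (t + 1), g t) with hP
  have Dadd : ∀ k, Dn (t0 + 2 * k) := by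
    intro k
    induction k with
    | zero => simpa using ht0
    | succ k ih =>
      rw [show t0 + 2 * (k + 1) = t0 + 2 * k + 2 by ring]
      exact step2 _ ih
  have zig : ∀ t, Dn t → prec (P t) (P (t + 2)) := by
    intro t ht
    have h1 : ¬ Dn (t + 1) := S3 t ht
    have h2 : Dn (t + 2) := step2 t ht
    have := hzig (g t) (g (t + 1)) (g (t + 2)) (g (t + 3))
      (gE t) ht (gE (t + 1)) (S2 _ h1) (gE (t + 2)) h2
    simpa [hP, show t + 1 + 1 = t + 2 by ring, show t + 2 + 1 = t + 3 by ring] using this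
  have chain : ∀ k, prec (P t0) (P (t0 + 2 * (k + 1))) := by
    intro k
    induction k with
    | zero => simpa using zig t0 ht0
    | succ k ih =>
      have h1 := zig _ (Dadd (k + 1))
      have h2 : t0 + 2 * (k + 1) + 2 = t0 + 2 * (k + 1 + 1) := by ring
      rw [h2] at h1
      exact htrans _ _ _ ih h1
  have hper2 : P (t0 + 2 * n) = P t0 := by
    simp only [hP]
    have h1 : g (t0 + 2 * n) = g t0 := by
      rw [show t0 + 2 * n = t0 + n + n by ring, gper, gper]
    have h2 : g (t0 + 2 * n + 1) = g (t0 + 1) := by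
      rw [show t0 + 2 * n + 1 = t0 + 1 + n + n by ring, gper, gper]
    rw [h1, h2]
  have final := chain (n - 1)
  rw [show n - 1 + 1 = n by omega, hper2] at final
  exact hirrefl _ ht0 final
end

section
/- Acyclicity of the Morse matching for 2-torus braids: On the set of enhanced words of length m (words over Y = {0^x, 0^1, 0^-, 1^x, 1^1, 1^-}) define the matching M to consist of all pairs (z, x) where z = 1…1 0^x 0^x … 0^x 0^1 0^s y_j…y_m and x = 1…1 0^x 0^x … 0^x 0^s 1 y_j…y_m for some 3 ≤ j ≤ m+1, tail symbols y_j,…,y_m ∈ Y, and superscript s ∈ {1, x, −} (the initial run of 1's and the run of 0^x's may be empty). Then the directed graph whose vertices are enhanced words, whose edges are the nonzero Khovanov cube matrix elements with arrows of M reversed, contains no directed cycle. In particular this can be proved by the strict preorder on M in which (a ↗ b) ≺ (a' ↗ b') whenever O(b) < O(b'), or O(b) = O(b') and L(a ↗ b) > L(a' ↗ b'), where O(w) is the number of leading 1's of w and L of an edge is the index at which the two words differ. -/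
/-!
STATEMENT 8: Acyclicity of the Morse matching for 2-torus braids: the graph on enhanced
words of `σ₁^m` whose edges are the nonzero delooped Khovanov-cube matrix elements, with
the arrows of the matching `M` (pattern `1…1 0^x…0^x 0^1 0^s y ↗ 1…1 0^x…0^x 0^s 1 y`)
reversed, contains no directed cycle; hence `M` is a Morse matching.
-/

namespace Stmt8

/-- The symbols: `zx = 0^x`, `z1 = 0^1`, `zm = 0^-`, `om = 1^-`. -/
inductive Sym : Type
  | zx | z1 | zm | om
  deriving DecidableEq

open Sym

/-- Words are functions `ℕ → Sym`; a word of length `m` is padded with `om` beyond `m`. -/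
abbrev Word : Type := ℕ → Sym

/-- A symbol is a zero-smoothing. -/
def isZ (s : Sym) : Prop := s ≠ om

/-- An enhanced word of the 2-strand braid `σ₁^m`: padded by `om` beyond `m`, and a `0`
carries superscript `x` or `1` iff it is not the last zero (the last zero carries `-`,
ones carry `-`). -/
def Valid (m : ℕ) (w : Word) : Prop :=
  (∀ i, m ≤ i → w i = om) ∧
  ∀ i < m, ((w i = zx ∨ w i = z1) ↔ (isZ (w i) ∧ ∃ j, i < j ∧ j < m ∧ isZ (w j)))

/-- The nonzero matrix elements of the delooped Khovanov cube of `σ₁^m` between enhanced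
words: `b` is obtained from `a` by changing one `0` (at index `q`) into a `1`; depending on
the position of `q` among the zeros of `a`, the corresponding dotted cobordism is nonzero
precisely in the following cases (merges of labelled circles following the Frobenius rules
`x·x = 0`, `x·1 = x`, `1·1 = 1`, merges of a labelled circle into the through-strands being
the identity or a dotted identity). -/
def KEdge (m : ℕ) (a b : Word) : Prop :=
  Valid m a ∧ Valid m b ∧ ∃ q, q < m ∧ isZ (a q) ∧ b q = om ∧
    ( -- `q` is the first zero (possibly the only one): a circle (if any) is merged into
      -- the through-strands; all other labels are unchanged
      ((∀ i, i < q → a i = om) ∧ (∀ i, i ≠ q → b i = a i)) ∨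
      -- `q` is the last zero, with a previous zero at `p`: the circle `(p, q)` is merged
      -- into the through-strands and `p` becomes the (unlabelled) last zero
      (∃ p, p < q ∧ isZ (a p) ∧ (∀ i, p < i → i < q → a i = om) ∧
        (∀ i, q < i → a i = om) ∧ b p = zm ∧
        (∀ i, i ≠ p → i ≠ q → b i = a i)) ∨
      -- `q` is a middle zero, with previous zero `p` and a later zero: the circles
      -- `(p, q)` and `(q, next)` merge, with labels multiplied (`x·x` gives the zero
      -- morphism, hence no edge)
      (∃ p, p < q ∧ isZ (a p) ∧ (∀ i, p < i → i < q → a i = om) ∧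
        (∃ j, q < j ∧ j < m ∧ isZ (a j)) ∧ ¬(a p = zx ∧ a q = zx) ∧
        ((a p = z1 ∧ a q = z1 ∧ b p = z1) ∨ (¬(a p = z1 ∧ a q = z1) ∧ b p = zx)) ∧
        (∀ i, i ≠ p → i ≠ q → b i = a i)))

/-- The matching pattern at position `p`:
`z = 1…1 0^x…0^x 0^1 0^s y…` is matched with `x = 1…1 0^x…0^x 0^s 1 y…`. -/
def Mpat (m : ℕ) (z x : Word) (p : ℕ) : Prop :=
  p + 1 < m ∧
  (∃ t, t ≤ p ∧ (∀ i, i < t → z i = om) ∧ (∀ i, t ≤ i → i < p → z i = zx)) ∧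
  z p = z1 ∧ isZ (z (p + 1)) ∧
  x p = z (p + 1) ∧ x (p + 1) = om ∧ (∀ i, i ≠ p → i ≠ p + 1 → x i = z i)

/-- The Morse matching `M` on the enhanced words of `σ₁^m`. -/
def MM (m : ℕ) (z x : Word) : Prop :=
  Valid m z ∧ Valid m x ∧ ∃ p, Mpat m z x p

/-- The edge relation of the graph `G(⟦σ₁^m⟧_Enh, M)`: nonzero matrix elements, with the
arrows of `M` reversed. -/
def GE (m : ℕ) (a b : Word) : Prop := (KEdge m a b ∧ ¬ MM m a b) ∨ MM m b a

/-- A directed cycle. -/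
def HasCycle {V : Type*} (E : V → V → Prop) : Prop :=
  ∃ (n : ℕ) (f : ℕ → V), 0 < n ∧ f n = f 0 ∧ ∀ t < n, E (f t) (f (t + 1))


/-! ### Auxiliary definitions -/

noncomputable def Ofst (m : ℕ) (w : Word) : ℕ := sInf {i | w i ≠ om ∨ m ≤ i}

lemma Ofst_le (m : ℕ) (w : Word) : Ofst m w ≤ m :=
  Nat.sInf_le (show m ∈ {i | w i ≠ om ∨ m ≤ i} from Or.inr le_rfl)

lemma Ofst_spec {m : ℕ} {w : Word} {k : ℕ} (hkm : k < m) (hk : w k ≠ om)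
    (h : ∀ i, i < k → w i = om) : Ofst m w = k := by
  have hne : k ∈ {i | w i ≠ om ∨ m ≤ i} := Or.inl hk
  refine le_antisymm (Nat.sInf_le hne) ?_
  by_contra hlt
  push_neg at hlt
  have hmem : Ofst m w ∈ {i | w i ≠ om ∨ m ≤ i} := Nat.sInf_mem ⟨k, hne⟩
  simp only [Set.mem_setOf_eq] at hmem
  rcases hmem with h1 | h2
  · exact h1 (h _ hlt)
  · omega

def zPat (m : ℕ) (w : Word) (p : ℕ) : Prop :=
  p + 1 < m ∧
  (∃ t, t ≤ p ∧ (∀ i, i < t → w i = om) ∧ (∀ i, t ≤ i → i < p → w i = zx)) ∧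
  w p = z1 ∧ isZ (w (p + 1))

def xPat (m : ℕ) (w : Word) (p : ℕ) : Prop :=
  p + 1 < m ∧
  (∃ t, t ≤ p ∧ (∀ i, i < t → w i = om) ∧ (∀ i, t ≤ i → i < p → w i = zx)) ∧
  isZ (w p) ∧ w (p + 1) = om

lemma Mpat_zPat {m : ℕ} {z x : Word} {p : ℕ} (h : Mpat m z x p) : zPat m z p :=
  ⟨h.1, h.2.1, h.2.2.1, h.2.2.2.1⟩

lemma Mpat_xPat {m : ℕ} {z x : Word} {p : ℕ} (h : Mpat m z x p) : xPat m x p := by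
  obtain ⟨h1, ⟨t, ht, hom, hzx⟩, hz1, hZ, hxp, hxp1, heq⟩ := h
  refine ⟨h1, ⟨t, ht, ?_, ?_⟩, ?_, hxp1⟩
  · intro i hi; rw [heq i (by omega) (by omega)]; exact hom i hi
  · intro i h2 h3; rw [heq i (by omega) (by omega)]; exact hzx i h2 h3
  · show x p ≠ om
    rw [hxp]; exact hZ

lemma Mpat_O {m : ℕ} {z x : Word} {p : ℕ} (h : Mpat m z x p) : Ofst m z = Ofst m x := by
  obtain ⟨h1, ⟨t, ht, hom, hzx⟩, hz1, hZ, hxp, hxp1, heq⟩ := h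
  have htm : t < m := by omega
  have hz : Ofst m z = t := by
    refine Ofst_spec htm ?_ hom
    rcases eq_or_lt_of_le ht with h2 | h2
    · rw [h2, hz1]; decide
    · rw [hzx t le_rfl h2]; decide
  have hx : Ofst m x = t := by
    refine Ofst_spec htm ?_ ?_
    · rcases eq_or_lt_of_le ht with h2 | h2
      · rw [h2, hxp]; exact hZ
      · rw [heq t (by omega) (by omega), hzx t le_rfl h2]; decide
    · intro i hi
      rw [heq i (by omega) (by omega)]; exact hom i hi
  rw [hz, hx]

lemma xPat_unique {m : ℕ} {w : Word} {p₁ p₂ : ℕ} (h1 : xPat m w p₁) (h2 : xPat m w p₂) :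
    p₁ = p₂ := by
  have key : ∀ a b, xPat m w a → xPat m w b → a < b → False := by
    intro a b ha hb hab
    obtain ⟨hb1, ⟨t, ht, hom, hzx⟩, hbZ, hb2⟩ := hb
    obtain ⟨ha1, -, haZ, ha2⟩ := ha
    have h3 : t ≤ a := by
      by_contra h; push_neg at h; exact haZ (hom a h)
    rcases eq_or_lt_of_le (show a + 1 ≤ b by omega) with h4 | h4
    · exact hbZ (h4 ▸ ha2)
    · have h5 := hzx (a+1) (by omega) h4
      rw [ha2] at h5; exact absurd h5 (by decide)
  rcases lt_trichotomy p₁ p₂ with h | h | h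
  · exact (key _ _ h1 h2 h).elim
  · exact h
  · exact (key _ _ h2 h1 h).elim

lemma zPat_xPat_false {m : ℕ} {w : Word} {p p' : ℕ} (hz : zPat m w p) (hx : xPat m w p') :
    False := by
  obtain ⟨hp1, ⟨t, ht, hom, hzx⟩, hz1, hZ⟩ := hz
  obtain ⟨hp'1, ⟨t', ht', hom', hzx'⟩, hZ', he'⟩ := hx
  rcases lt_trichotomy p' p with h | h | h
  · have h3 : t ≤ p' := by
      by_contra h4; push_neg at h4; exact hZ' (hom p' h4)
    rcases eq_or_lt_of_le (show p' + 1 ≤ p by omega) with h4 | h4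
    · rw [← h4] at hz1; rw [he'] at hz1; exact absurd hz1 (by decide)
    · have h5 := hzx (p'+1) (by omega) h4
      rw [he'] at h5; exact absurd h5 (by decide)
  · exact hZ (h ▸ he')
  · rcases lt_or_ge p t' with h4 | h4
    · have h5 := hom' p h4; rw [hz1] at h5; exact absurd h5 (by decide)
    · have h5 := hzx' p h4 h; rw [hz1] at h5; exact absurd h5 (by decide)


lemma lemA {m : ℕ} {z b : Word} {p p' : ℕ} (hz : zPat m z p)
    (hK : KEdge m z b) (hnM : ¬ MM m z b) (hx : xPat m b p') :
    Ofst m z < Ofst m b ∨ (Ofst m z = Ofst m b ∧ p' < p) := by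
  obtain ⟨hp1, ⟨t, htp, hom, hzx⟩, hzp, hzp1⟩ := hz
  obtain ⟨hvz, hvb, q, hqm, hzq, hbq, hcase⟩ := hK
  have hzZ1 : (z1 : Sym) ≠ om := by decide
  have hzxne : (zx : Sym) ≠ om := by decide
  have hztne : z t ≠ om := by
    rcases eq_or_lt_of_le htp with h | h
    · rw [h, hzp]; exact hzZ1
    · rw [hzx t le_rfl h]; exact hzxne
  have hOz : Ofst m z = t := Ofst_spec (by omega) hztne hom
  have hnom : ∀ i, t ≤ i → i ≤ p + 1 → z i ≠ om := by
    intro i h1 h2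
    rcases lt_or_ge i p with h3 | h3
    · rw [hzx i h1 h3]; exact hzxne
    · rcases eq_or_lt_of_le h3 with h4 | h4
      · rw [← h4, hzp]; exact hzZ1
      · have h5 : i = p + 1 := by omega
        rw [h5]; exact hzp1
  rcases hcase with ⟨hfst, hbeq⟩ | ⟨p₀, hpq, hzp₀, hbetw, hlast, hbp₀, hbeq⟩ |
    ⟨p₀, hpq, hzp₀, hbetw, ⟨j, hqj, hjm, hzj⟩, hnxx, hlab, hbeq⟩
  · -- Case 1 : q is the first zero, so q = t
    have hqt : q = t := by
      have h1 : ¬ t < q := fun h => hztne (hfst t h)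
      have h2 : ¬ q < t := fun h => hzq (hom q h)
      omega
    subst hqt
    rcases eq_or_lt_of_le htp with h | h
    · -- q = t = p : the first index jumps to p+1
      left
      have hOb : Ofst m b = q + 1 := by
        refine Ofst_spec (by omega) ?_ ?_
        · rw [hbeq (q+1) (by omega), h]; exact hzp1
        · intro i hi
          rcases eq_or_lt_of_le (Nat.lt_succ_iff.mp hi) with h2 | h2
          · rw [h2]; exact hbq
          · rw [hbeq i (by omega)]; exact hom i h2
      rw [hOz, hOb]; omega
    · -- t < p : b is not an x-part, contradiction
      exfalso
      obtain ⟨hp'1, ⟨t', ht', hom', hzx'⟩, hZ', hb'⟩ := hx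
      rcases lt_trichotomy p' p with hc | hc | hc
      · have h1 : p' ≠ q := by
          intro h2; rw [h2] at hZ'; exact hZ' hbq
        have h2 : z p' ≠ om := by
          intro h3; exact hZ' (by rw [hbeq p' h1, h3])
        have h3 : q ≤ p' := by
          by_contra h4; push_neg at h4; exact h2 (hom p' h4)
        have h4 : b (p'+1) = z (p'+1) := hbeq (p'+1) (by omega)
        exact hnom (p'+1) (by omega) (by omega) (by rw [← h4]; exact hb')
      · have h4 : b (p+1) = z (p+1) := hbeq (p+1) (by omega)
        rw [hc] at hb'
        exact hzp1 (by rw [← h4]; exact hb')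
      · have h4 : b p = z p := hbeq p (by omega)
        rcases lt_or_ge p t' with h5 | h5
        · have h6 := hom' p h5; rw [h4, hzp] at h6; exact hzZ1 h6
        · have h6 := hzx' p h5 hc; rw [h4, hzp] at h6; exact absurd h6 (by decide)
  · -- Case 2 : q is the last zero, previous zero p₀
    have hq1 : p + 1 ≤ q := by
      by_contra h4; push_neg at h4
      exact hzp1 (hlast (p+1) h4)
    have hpp₀ : p ≤ p₀ := by
      by_contra h4; push_neg at h4
      have h5 := hbetw p h4 (by omega)
      rw [hzp] at h5; exact hzZ1 h5
    rcases eq_or_lt_of_le hq1 with hc | hc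
    · -- q = p+1 : b is the matched partner, contradiction with hnM
      exfalso
      have hp₀ : p₀ = p := by omega
      have hzqm : z q = zm := by
        have hR : ¬ (isZ (z q) ∧ ∃ j, q < j ∧ j < m ∧ isZ (z j)) := by
          rintro ⟨-, j, hj1, hj2, hj3⟩; exact hj3 (hlast j hj1)
        have hL : ¬ (z q = zx ∨ z q = z1) := fun h => hR ((hvz.2 q hqm).mp h)
        have hne : z q ≠ om := hzq
        cases hq : z q with
        | zx => exact absurd (Or.inl hq) hL
        | z1 => exact absurd (Or.inr hq) hL
        | zm => rfl
        | om => exact absurd hq hne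
      apply hnM
      refine ⟨hvz, hvb, p, hp1, ⟨t, htp, hom, hzx⟩, hzp, hzp1, ?_, ?_, ?_⟩
      · rw [hp₀] at hbp₀
        rw [hbp₀, hc, hzqm]
      · rw [hc]; exact hbq
      · intro i h1 h2; exact hbeq i (by omega) (by omega)
    · -- p+1 < q : b is not an x-part
      exfalso
      have hpp₀' : p + 1 ≤ p₀ := by
        by_contra h4; push_neg at h4
        exact hzp1 (hbetw (p+1) (by omega) (by omega))
      obtain ⟨hp'1, ⟨t', ht', hom', hzx'⟩, hZ', hb'⟩ := hx
      rcases lt_trichotomy p' p with hd | hd | hd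
      · have h2 : b p' = z p' := hbeq p' (by omega) (by omega)
        have h3 : z p' ≠ om := fun h4 => hZ' (by rw [h2, h4])
        have h5 : t ≤ p' := by
          by_contra h6; push_neg at h6; exact h3 (hom p' h6)
        have h6 : b (p'+1) = z (p'+1) := hbeq (p'+1) (by omega) (by omega)
        exact hnom (p'+1) (by omega) (by omega) (by rw [← h6]; exact hb')
      · rw [hd] at hb'
        rcases eq_or_lt_of_le hpp₀' with he | he
        · rw [← he] at hbp₀; rw [hbp₀] at hb'
          exact absurd hb' (by decide)
        · have h6 : b (p+1) = z (p+1) := hbeq (p+1) (by omega) (by omega)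
          exact hzp1 (by rw [← h6]; exact hb')
      · have h4 : b p = z p := hbeq p (by omega) (by omega)
        rcases lt_or_ge p t' with h5 | h5
        · have h6 := hom' p h5; rw [h4, hzp] at h6; exact hzZ1 h6
        · have h6 := hzx' p h5 hd; rw [h4, hzp] at h6; exact absurd h6 (by decide)
  · -- Case 3 : q is a middle zero, previous zero p₀
    have hbp0 : b p₀ = z1 ∨ b p₀ = zx := by
      rcases hlab with ⟨-, -, h⟩ | ⟨-, h⟩
      · exact Or.inl h
      · exact Or.inr h
    have htp₀ : t ≤ p₀ := by
      by_contra h4; push_neg at h4; exact hzp₀ (hom p₀ h4)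
    have htq : t < q := by omega
    rcases lt_trichotomy q p with hc | hc | hc
    · -- q < p : both zx, no edge
      exact absurd ⟨hzx p₀ htp₀ (by omega), hzx q (by omega) hc⟩ hnxx
    · -- q = p : measure second component decreases
      right
      have htlt : t < p := by omega
      have hp₀1 : p₀ + 1 = p := by
        by_contra h4
        have h5 : p₀ + 1 < p := by omega
        have h6 := hbetw (p₀+1) (by omega) (by omega)
        exact hnom (p₀+1) (by omega) (by omega) h6
      have hzpp₀ : z p₀ = zx := hzx p₀ htp₀ (by omega)
      have hb₀ : b p₀ = zx := by
        rcases hlab with ⟨h1, -, -⟩ | ⟨-, h⟩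
        · rw [hzpp₀] at h1; exact absurd h1 (by decide)
        · exact h
      have hObt : Ofst m b = t := by
        refine Ofst_spec (by omega) ?_ ?_
        · rcases eq_or_lt_of_le htp₀ with h1 | h1
          · rw [← h1] at hb₀; rw [hb₀]; exact hzxne
          · rw [hbeq t (by omega) (by omega), hzx t le_rfl htlt]; exact hzxne
        · intro i hi
          rw [hbeq i (by omega) (by omega)]; exact hom i hi
      have hxb : xPat m b p₀ := by
        refine ⟨by omega, ⟨t, htp₀, ?_, ?_⟩, ?_, ?_⟩
        · intro i hi; rw [hbeq i (by omega) (by omega)]; exact hom i hi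
        · intro i h1 h2; rw [hbeq i (by omega) (by omega)]; exact hzx i h1 (by omega)
        · show b p₀ ≠ om
          rw [hb₀]; exact hzxne
        · have h1 : p₀ + 1 = q := by omega
          rw [h1]; exact hbq
      have hp' : p' = p₀ := xPat_unique hx hxb
      constructor
      · rw [hOz, hObt]
      · omega
    · -- p < q
      rcases eq_or_lt_of_le (show p + 1 ≤ q by omega) with hc2 | hc2
      · -- q = p+1 : matched edge, contradiction with hnM
        exfalso
        have hp₀p : p₀ = p := by
          by_contra h4
          have h5 : p₀ < p := by omega
          have h6 := hbetw p (by omega) (by omega)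
          rw [hzp] at h6; exact hzZ1 h6
        have hzq' : z q = zx ∨ z q = z1 :=
          (hvz.2 q hqm).mpr ⟨hzq, j, hqj, hjm, hzj⟩
        have hbpzq : b p₀ = z q := by
          rcases hlab with ⟨-, h2, h3⟩ | ⟨h2, h3⟩
          · rw [h3, h2]
          · rcases hzq' with h4 | h4
            · rw [h3, h4]
            · exact absurd ⟨by rw [hp₀p]; exact hzp, h4⟩ h2
        apply hnM
        refine ⟨hvz, hvb, p, hp1, ⟨t, htp, hom, hzx⟩, hzp, hzp1, ?_, ?_, ?_⟩
        · rw [hc2, ← hp₀p]; exact hbpzq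
        · rw [hc2]; exact hbq
        · intro i h1 h2; exact hbeq i (by omega) (by omega)
      · -- p+1 < q : b is not an x-part
        exfalso
        have hpp₀' : p + 1 ≤ p₀ := by
          by_contra h4; push_neg at h4
          exact hzp1 (hbetw (p+1) (by omega) (by omega))
        obtain ⟨hp'1, ⟨t', ht', hom', hzx'⟩, hZ', hb'⟩ := hx
        rcases lt_trichotomy p' p with hd | hd | hd
        · have h2 : b p' = z p' := hbeq p' (by omega) (by omega)
          have h3 : z p' ≠ om := fun h4 => hZ' (by rw [h2, h4])
          have h5 : t ≤ p' := by
            by_contra h6; push_neg at h6; exact h3 (hom p' h6)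
          have h6 : b (p'+1) = z (p'+1) := hbeq (p'+1) (by omega) (by omega)
          exact hnom (p'+1) (by omega) (by omega) (by rw [← h6]; exact hb')
        · rw [hd] at hb'
          rcases eq_or_lt_of_le hpp₀' with he | he
          · rw [← he] at hbp0
            rcases hbp0 with h4 | h4 <;> (rw [h4] at hb'; exact absurd hb' (by decide))
          · have h6 : b (p+1) = z (p+1) := hbeq (p+1) (by omega) (by omega)
            exact hzp1 (by rw [← h6]; exact hb')
        · have h4 : b p = z p := hbeq p (by omega) (by omega)
          rcases lt_or_ge p t' with h5 | h5
          · have h6 := hom' p h5; rw [h4, hzp] at h6; exact hzZ1 h6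
          · have h6 := hzx' p h5 hd; rw [h4, hzp] at h6; exact absurd h6 (by decide)


lemma stepLem {m : ℕ} {z b c : Word} {p : ℕ} (hz : zPat m z p)
    (hK : KEdge m z b) (hnM : ¬ MM m z b) (hM : MM m c b) :
    ∃ p', zPat m c p' ∧
      Ofst m z * (m+1) + (m - p) < Ofst m c * (m+1) + (m - p') := by
  obtain ⟨-, -, p', hpat⟩ := hM
  have hxb : xPat m b p' := Mpat_xPat hpat
  have hzc : zPat m c p' := Mpat_zPat hpat
  have hO : Ofst m c = Ofst m b := Mpat_O hpat
  have hpm : p + 1 < m := hz.1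
  have hpm' : p' + 1 < m := hzc.1
  refine ⟨p', hzc, ?_⟩
  rw [hO]
  rcases lemA hz hK hnM hxb with h | ⟨h1, h2⟩
  · have h3 : (Ofst m z + 1) * (m+1) ≤ Ofst m b * (m+1) :=
      Nat.mul_le_mul_right _ h
    have h4 : (Ofst m z + 1) * (m+1) = Ofst m z * (m+1) + (m+1) := by ring
    have h5 : m - p ≤ m := Nat.sub_le _ _
    omega
  · rw [← h1]
    have h3 : m - p < m - p' := by omega
    omega

def nzc (m : ℕ) (w : Word) : ℕ := ((Finset.range m).filter (fun i => w i ≠ om)).card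

lemma nz_K {m : ℕ} {a b : Word} (h : KEdge m a b) : nzc m b + 1 = nzc m a := by
  obtain ⟨hva, hvb, q, hqm, haq, hbq, hcase⟩ := h
  have hiff : ∀ i, (b i ≠ om ↔ (i ≠ q ∧ a i ≠ om)) := by
    intro i
    rcases eq_or_ne i q with h1 | h1
    · subst h1; simp [hbq]
    · constructor
      · intro h2
        refine ⟨h1, ?_⟩
        rcases hcase with ⟨-, hbeq⟩ | ⟨p₀, -, hzp₀, -, -, hbp₀, hbeq⟩ |
            ⟨p₀, -, hzp₀, -, -, -, hlab, hbeq⟩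
        · rw [← hbeq i h1]; exact h2
        · rcases eq_or_ne i p₀ with h3 | h3
          · subst h3; exact hzp₀
          · rw [← hbeq i h3 h1]; exact h2
        · rcases eq_or_ne i p₀ with h3 | h3
          · subst h3; exact hzp₀
          · rw [← hbeq i h3 h1]; exact h2
      · rintro ⟨-, h2⟩
        rcases hcase with ⟨-, hbeq⟩ | ⟨p₀, -, hzp₀, -, -, hbp₀, hbeq⟩ |
            ⟨p₀, -, hzp₀, -, -, -, hlab, hbeq⟩
        · rw [hbeq i h1]; exact h2
        · rcases eq_or_ne i p₀ with h3 | h3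
          · subst h3; rw [hbp₀]; decide
          · rw [hbeq i h3 h1]; exact h2
        · rcases eq_or_ne i p₀ with h3 | h3
          · subst h3
            rcases hlab with ⟨-, -, h4⟩ | ⟨-, h4⟩ <;> rw [h4] <;> decide
          · rw [hbeq i h3 h1]; exact h2
  have hset : (Finset.range m).filter (fun i => b i ≠ om) =
      ((Finset.range m).filter (fun i => a i ≠ om)).erase q := by
    ext i
    simp only [Finset.mem_filter, Finset.mem_erase, Finset.mem_range]
    constructor
    · rintro ⟨h1, h2⟩
      rcases (hiff i).mp h2 with ⟨h3, h4⟩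
      exact ⟨h3, h1, h4⟩
    · rintro ⟨h1, h2, h3⟩
      exact ⟨h2, (hiff i).mpr ⟨h1, h3⟩⟩
  have hqmem : q ∈ (Finset.range m).filter (fun i => a i ≠ om) :=
    Finset.mem_filter.mpr ⟨Finset.mem_range.mpr hqm, haq⟩
  have hpos : 0 < ((Finset.range m).filter (fun i => a i ≠ om)).card :=
    Finset.card_pos.mpr ⟨q, hqmem⟩
  unfold nzc
  rw [hset, Finset.card_erase_of_mem hqmem]
  omega

lemma nz_M {m : ℕ} {z x : Word} {p : ℕ} (h : Mpat m z x p) : nzc m x + 1 = nzc m z := by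
  obtain ⟨hp1, -, hz1, hZ, hxp, hxp1, heq⟩ := h
  have hZ' : z (p+1) ≠ om := hZ
  have hset : (Finset.range m).filter (fun i => z i ≠ om) =
      insert (p+1) ((Finset.range m).filter (fun i => x i ≠ om)) := by
    ext i
    simp only [Finset.mem_filter, Finset.mem_insert, Finset.mem_range]
    constructor
    · rintro ⟨h1, h2⟩
      rcases eq_or_ne i (p+1) with h3 | h3
      · exact Or.inl h3
      · refine Or.inr ⟨h1, ?_⟩
        rcases eq_or_ne i p with h4 | h4
        · subst h4; rw [hxp]; exact hZ'
        · rw [heq i h4 h3]; exact h2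
    · rintro (h1 | ⟨h1, h2⟩)
      · subst h1; exact ⟨hp1, hZ'⟩
      · rcases eq_or_ne i (p+1) with h3 | h3
        · subst h3; exact ⟨hp1, hZ'⟩
        · refine ⟨h1, ?_⟩
          rcases eq_or_ne i p with h4 | h4
          · subst h4; rw [hz1]; decide
          · rw [← heq i h4 h3]; exact h2
  have hnotmem : (p+1) ∉ (Finset.range m).filter (fun i => x i ≠ om) := by
    simp [Finset.mem_filter, hxp1]
  unfold nzc
  rw [hset, Finset.card_insert_of_notMem hnotmem]

/-! ### Cyclic index machinery -/

def gg (n : ℕ) (f : ℕ → Word) (t : ℕ) : Word := f (t % n)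

lemma gg_add (n : ℕ) (f : ℕ → Word) (t k : ℕ) : gg n f (t % n + k) = gg n f (t + k) := by
  unfold gg; rw [Nat.mod_add_mod]

lemma gg_mod (n : ℕ) (f : ℕ → Word) (t : ℕ) : gg n f (t % n) = gg n f t := by
  unfold gg; rw [Nat.mod_mod_of_dvd t dvd_rfl]

def PP (m n : ℕ) (f : ℕ → Word) (t : ℕ) : Prop := MM m (gg n f (t+1)) (gg n f t)

lemma PP_mod (m n : ℕ) (f : ℕ → Word) (t : ℕ) : PP m n f (t % n) ↔ PP m n f t := by
  unfold PP
  rw [gg_add n f t 1, gg_mod n f t]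

lemma PP_succ_mod (m n : ℕ) (f : ℕ → Word) (t : ℕ) :
    PP m n f (t % n + 1) ↔ PP m n f (t + 1) := by
  unfold PP
  have e1 : t % n + 1 + 1 = t % n + 2 := rfl
  have e2 : t + 1 + 1 = t + 2 := rfl
  rw [e1, e2, gg_add n f t 2, gg_add n f t 1]

lemma ggE {m n : ℕ} {f : ℕ → Word} (hn : 0 < n) (hfn : f n = f 0)
    (hE : ∀ t < n, GE m (f t) (f (t + 1))) (t : ℕ) :
    GE m (gg n f t) (gg n f (t + 1)) := by
  have h1 : t % n < n := Nat.mod_lt _ hn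
  have h2 := hE (t % n) h1
  have h3 : f (t % n + 1) = gg n f (t + 1) := by
    show f (t % n + 1) = f ((t + 1) % n)
    rcases eq_or_lt_of_le (Nat.succ_le_of_lt h1) with h4 | h4
    · have h4' : t % n + 1 = n := h4
      rw [← Nat.mod_add_mod, h4', Nat.mod_self]
      exact hfn
    · rw [← Nat.mod_add_mod, Nat.mod_eq_of_lt h4]
  rw [← h3]
  exact h2


theorem stmt8 (m : ℕ) : ¬ HasCycle (GE m) := by
  rintro ⟨n, f, hn, hfn, hE⟩
  classical
  have hgE : ∀ t, GE m (gg n f t) (gg n f (t + 1)) := ggE hn hfn hE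
  -- no two reversed matching edges in a row
  have hA : ∀ t, PP m n f t → PP m n f (t + 1) → False := by
    intro t h1 h2
    obtain ⟨-, -, p1, hp1⟩ := h1
    obtain ⟨-, -, p2, hp2⟩ := h2
    exact zPat_xPat_false (Mpat_zPat hp1) (Mpat_xPat hp2)
  -- non-reversed edges are Khovanov edges
  have hKE : ∀ t, ¬ PP m n f t →
      KEdge m (gg n f t) (gg n f (t+1)) ∧ ¬ MM m (gg n f t) (gg n f (t+1)) := by
    intro t h1
    rcases hgE t with h2 | h2
    · exact h2
    · exact absurd h2 h1
  -- zero-count change along each edge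
  have hdelta : ∀ t, ((nzc m (gg n f (t+1)) : ℤ) - nzc m (gg n f t)) =
      if PP m n f t then 1 else -1 := by
    intro t
    by_cases h1 : PP m n f t
    · rw [if_pos h1]
      obtain ⟨-, -, p1, hp1⟩ := h1
      have h2 := nz_M hp1
      omega
    · rw [if_neg h1]
      have h2 := nz_K (hKE t h1).1
      omega
  -- telescoping sum is zero
  have hsum : ∑ t ∈ Finset.range n, ((nzc m (gg n f (t+1)) : ℤ) - nzc m (gg n f t)) = 0 := by
    rw [Finset.sum_range_sub (fun t => (nzc m (gg n f t) : ℤ))]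
    have h1 : gg n f n = gg n f 0 := by
      unfold gg
      rw [Nat.mod_self, Nat.zero_mod]
    rw [h1]
    ring
  -- equal numbers of the two kinds of edges
  have hcard : ((Finset.range n).filter (fun t => PP m n f t)).card =
      ((Finset.range n).filter (fun t => ¬ PP m n f t)).card := by
    have h1 : ∑ t ∈ Finset.range n, (if PP m n f t then (1:ℤ) else -1) = 0 := by
      rw [← hsum]
      exact Finset.sum_congr rfl (fun t _ => (hdelta t).symm)
    rw [Finset.sum_ite] at h1
    simp only [Finset.sum_const, nsmul_eq_mul, mul_one, mul_neg] at h1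
    omega
  have hST : ((Finset.range n).filter (fun t => PP m n f t)).card +
      ((Finset.range n).filter (fun t => ¬ PP m n f t)).card = n := by
    rw [Finset.card_filter_add_card_filter_not, Finset.card_range]
  -- the cyclic successor is injective on range n
  have hinj : ∀ a, a < n → ∀ b, b < n → (a+1) % n = (b+1) % n → a = b := by
    intro a ha b hb h
    rcases eq_or_lt_of_le (Nat.succ_le_of_lt ha) with h1 | h1 <;>
      rcases eq_or_lt_of_le (Nat.succ_le_of_lt hb) with h2 | h2
    · omega
    · have h1' : a + 1 = n := h1
      rw [h1', Nat.mod_self, Nat.mod_eq_of_lt h2] at h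
      omega
    · have h2' : b + 1 = n := h2
      rw [h2', Nat.mod_self, Nat.mod_eq_of_lt h1] at h
      omega
    · rw [Nat.mod_eq_of_lt h1, Nat.mod_eq_of_lt h2] at h
      omega
  -- image of the matched edges under successor is exactly the K-edges
  have hSimg : ((Finset.range n).filter (fun t => PP m n f t)).image (fun t => (t+1) % n) =
      (Finset.range n).filter (fun t => ¬ PP m n f t) := by
    apply Finset.eq_of_subset_of_card_le
    · intro x hx
      simp only [Finset.mem_image] at hx
      obtain ⟨s, hs, hsx⟩ := hx
      rw [Finset.mem_filter, Finset.mem_range] at hs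
      rw [Finset.mem_filter, Finset.mem_range]
      constructor
      · rw [← hsx]; exact Nat.mod_lt _ hn
      · intro hPx
        rw [← hsx] at hPx
        exact hA s hs.2 ((PP_mod m n f (s+1)).mp hPx)
    · have h1 : (((Finset.range n).filter (fun t => PP m n f t)).image
          (fun t => (t+1) % n)).card =
          ((Finset.range n).filter (fun t => PP m n f t)).card := by
        apply Finset.card_image_of_injOn
        intro a ha b hb h
        have ha' : a < n := Finset.mem_range.mp (Finset.mem_filter.mp ha).1
        have hb' : b < n := Finset.mem_range.mp (Finset.mem_filter.mp hb).1
        exact hinj a ha' b hb' h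
      rw [h1, hcard]
  -- every K-edge is followed by a matched edge
  have hB : ∀ t, ¬ PP m n f t → PP m n f (t + 1) := by
    intro t h1
    by_contra h2
    have h3 : ¬ PP m n f ((t % n + 1) % n) := by
      intro h4
      exact h2 ((PP_succ_mod m n f t).mp ((PP_mod m n f (t % n + 1)).mp h4))
    have h5 : (t % n + 1) % n ∈ (Finset.range n).filter (fun t => ¬ PP m n f t) :=
      Finset.mem_filter.mpr ⟨Finset.mem_range.mpr (Nat.mod_lt _ hn), h3⟩
    rw [← hSimg] at h5
    obtain ⟨s, hs, hsx⟩ := Finset.mem_image.mp h5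
    have hs1 : s < n := Finset.mem_range.mp (Finset.mem_filter.mp hs).1
    have hs2 : PP m n f s := (Finset.mem_filter.mp hs).2
    have h6 : s = t % n := hinj s hs1 (t % n) (Nat.mod_lt _ hn) hsx
    rw [h6] at hs2
    exact h1 ((PP_mod m n f t).mp hs2)
  -- pick a K-edge
  have hTne : ∃ t₀, t₀ ∈ (Finset.range n).filter (fun t => ¬ PP m n f t) := by
    by_contra h1
    push_neg at h1
    have h2 : ((Finset.range n).filter (fun t => ¬ PP m n f t)).card = 0 :=
      Finset.card_eq_zero.mpr (Finset.eq_empty_iff_forall_notMem.mpr h1)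
    omega
  obtain ⟨t₀, ht₀⟩ := hTne
  have ht₀' : t₀ < n ∧ ¬ PP m n f t₀ := by
    rw [Finset.mem_filter, Finset.mem_range] at ht₀
    exact ht₀
  -- the source of this K-edge is a z-part
  have hzbase : ∃ p₀, zPat m (gg n f t₀) p₀ := by
    rw [← hSimg] at ht₀
    obtain ⟨s, hs, hsx⟩ := Finset.mem_image.mp ht₀
    have hPs : PP m n f s := (Finset.mem_filter.mp hs).2
    obtain ⟨-, -, p₀, hpat⟩ := hPs
    have he : gg n f (s+1) = gg n f t₀ := by
      rw [← hsx, gg_mod]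
    rw [he] at hpat
    exact ⟨p₀, Mpat_zPat hpat⟩
  obtain ⟨p₀, hzp₀⟩ := hzbase
  -- alternation
  have hpar : ∀ j, ¬ PP m n f (t₀ + 2 * j) := by
    intro j
    induction j with
    | zero => simpa using ht₀'.2
    | succ j ih =>
      have h1 : PP m n f (t₀ + 2*j + 1) := hB _ ih
      intro h2
      have h3 : PP m n f (t₀ + 2*j + 1 + 1) := by
        have e : t₀ + 2 * (j+1) = t₀ + 2*j + 1 + 1 := by ring
        rw [e] at h2
        exact h2
      exact hA _ h1 h3
  -- the measure strictly increases along the cycle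
  have hmain : ∀ j, ∃ p, zPat m (gg n f (t₀ + 2 * j)) p ∧
      Ofst m (gg n f t₀) * (m + 1) + (m - p₀) + j ≤
        Ofst m (gg n f (t₀ + 2 * j)) * (m + 1) + (m - p) := by
    intro j
    induction j with
    | zero => exact ⟨p₀, by simpa using hzp₀, by simp⟩
    | succ j ih =>
      obtain ⟨p, hzp, hle⟩ := ih
      have h1 := hpar j
      obtain ⟨hK, hnM⟩ := hKE (t₀ + 2*j) h1
      have h2 : PP m n f (t₀ + 2*j + 1) := hB _ h1
      have h2' : MM m (gg n f (t₀ + 2*j + 1 + 1)) (gg n f (t₀ + 2*j + 1)) := h2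
      obtain ⟨p', hzc, hlt⟩ := stepLem hzp hK hnM h2'
      have e : t₀ + 2 * (j+1) = t₀ + 2*j + 1 + 1 := by ring
      refine ⟨p', ?_, ?_⟩
      · rw [e]; exact hzc
      · rw [e]; omega
  -- but it is bounded: contradiction
  obtain ⟨p, hzp, hle⟩ := hmain (m * (m+1) + m + 1)
  have h1 : Ofst m (gg n f (t₀ + 2 * (m * (m+1) + m + 1))) ≤ m := Ofst_le m _
  have h2 : Ofst m (gg n f (t₀ + 2 * (m * (m+1) + m + 1))) * (m+1) ≤ m * (m+1) :=
    Nat.mul_le_mul_right _ h1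
  have h3 : m - p ≤ m := Nat.sub_le _ _
  omega

end Stmt8
end

section
/- Key zig-zag propagation lemma for 2-torus braids: With M the Morse matching on enhanced words of σ_1^m as above, suppose x ↘ z ↗ x' ↘ z' is a zig-zag path in the graph G(⟦σ_1^m⟧_Enh, M) (so (z ↗ x) and (z' ↗ x') are in M) and L(x ↘ z) > O(z) + 2. Then there exist a superscript s ∈ {x, 1, −} and symbols y_j,…,y_m such that z = 1…1 0^x 0^x … 0^x 0^1 0^s y_j…y_m, x' = 1…1 0^x 0^x … 0^x 1 0^s y_j…y_m, z' = 1…1 0^x 0^x … 0^1 0^x 0^s y_j…y_m, and L(x ↘ z) − 1 = L(x' ↘ z'). -/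
/-!
STATEMENT 9: Key zig-zag propagation lemma for 2-torus braids. If `x ↘ z ↗ x' ↘ z'` is a
zig-zag path in `G(⟦σ₁^m⟧_Enh, M)` (so `(z ↗ x), (z' ↗ x') ∈ M`, matched at positions
`p₁`, `p₂` respectively, and `z ↗ x'` is an (unmatched, nonzero) edge of the graph), with
`L(x ↘ z) > O(z) + 2` (here `L` of the matched edge at position `p` is the 1-based
changing index `p + 2`, and `O` counts the leading ones), then
`z = 1…1 0^x…0^x 0^1 0^s y…`, `x' = 1…1 0^x…0^x 1 0^s y…`,
`z' = 1…1 0^x…0^1 0^x 0^s y…`, and `L(x ↘ z) - 1 = L(x' ↘ z')`.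
-/

namespace Stmt9

/-- The symbols: `zx = 0^x`, `z1 = 0^1`, `zm = 0^-`, `om = 1^-`. -/
inductive Sym : Type
  | zx | z1 | zm | om
  deriving DecidableEq

open Sym

/-- Words are functions `ℕ → Sym`; a word of length `m` is padded with `om` beyond `m`. -/
abbrev Word : Type := ℕ → Sym

/-- A symbol is a zero-smoothing. -/
def isZ (s : Sym) : Prop := s ≠ om

/-- An enhanced word of the 2-strand braid `σ₁^m`: padded by `om` beyond `m`, and a `0`
carries superscript `x` or `1` iff it is not the last zero (the last zero carries `-`,
ones carry `-`). -/
def Valid (m : ℕ) (w : Word) : Prop :=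
  (∀ i, m ≤ i → w i = om) ∧
  ∀ i < m, ((w i = zx ∨ w i = z1) ↔ (isZ (w i) ∧ ∃ j, i < j ∧ j < m ∧ isZ (w j)))

/-- The nonzero matrix elements of the delooped Khovanov cube of `σ₁^m` between enhanced
words: `b` is obtained from `a` by changing one `0` (at index `q`) into a `1`; depending on
the position of `q` among the zeros of `a`, the corresponding dotted cobordism is nonzero
precisely in the following cases (merges of labelled circles following the Frobenius rules
`x·x = 0`, `x·1 = x`, `1·1 = 1`, merges of a labelled circle into the through-strands being
the identity or a dotted identity). -/
def KEdge (m : ℕ) (a b : Word) : Prop :=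
  Valid m a ∧ Valid m b ∧ ∃ q, q < m ∧ isZ (a q) ∧ b q = om ∧
    ( -- `q` is the first zero (possibly the only one): a circle (if any) is merged into
      -- the through-strands; all other labels are unchanged
      ((∀ i, i < q → a i = om) ∧ (∀ i, i ≠ q → b i = a i)) ∨
      -- `q` is the last zero, with a previous zero at `p`: the circle `(p, q)` is merged
      -- into the through-strands and `p` becomes the (unlabelled) last zero
      (∃ p, p < q ∧ isZ (a p) ∧ (∀ i, p < i → i < q → a i = om) ∧
        (∀ i, q < i → a i = om) ∧ b p = zm ∧
        (∀ i, i ≠ p → i ≠ q → b i = a i)) ∨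
      -- `q` is a middle zero, with previous zero `p` and a later zero: the circles
      -- `(p, q)` and `(q, next)` merge, with labels multiplied (`x·x` gives the zero
      -- morphism, hence no edge)
      (∃ p, p < q ∧ isZ (a p) ∧ (∀ i, p < i → i < q → a i = om) ∧
        (∃ j, q < j ∧ j < m ∧ isZ (a j)) ∧ ¬(a p = zx ∧ a q = zx) ∧
        ((a p = z1 ∧ a q = z1 ∧ b p = z1) ∨ (¬(a p = z1 ∧ a q = z1) ∧ b p = zx)) ∧
        (∀ i, i ≠ p → i ≠ q → b i = a i)))

/-- The matching pattern at position `p`: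
`z = 1…1 0^x…0^x 0^1 0^s y…` is matched with `x = 1…1 0^x…0^x 0^s 1 y…`. -/
def Mpat (m : ℕ) (z x : Word) (p : ℕ) : Prop :=
  p + 1 < m ∧
  (∃ t, t ≤ p ∧ (∀ i, i < t → z i = om) ∧ (∀ i, t ≤ i → i < p → z i = zx)) ∧
  z p = z1 ∧ isZ (z (p + 1)) ∧
  x p = z (p + 1) ∧ x (p + 1) = om ∧ (∀ i, i ≠ p → i ≠ p + 1 → x i = z i)

/-- The Morse matching `M` on the enhanced words of `σ₁^m`. -/
def MM (m : ℕ) (z x : Word) : Prop :=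
  Valid m z ∧ Valid m x ∧ ∃ p, Mpat m z x p

/-- The edge relation of the graph `G(⟦σ₁^m⟧_Enh, M)`: nonzero matrix elements, with the
arrows of `M` reversed. -/
def GE (m : ℕ) (a b : Word) : Prop := (KEdge m a b ∧ ¬ MM m a b) ∨ MM m b a

/-- A directed cycle. -/
def HasCycle {V : Type*} (E : V → V → Prop) : Prop :=
  ∃ (n : ℕ) (f : ℕ → V), 0 < n ∧ f n = f 0 ∧ ∀ t < n, E (f t) (f (t + 1))


/-- `O(w)`: the number of (non-superscript) ones before the first zero of `w`. -/
def Oval (m : ℕ) (w : Word) : ℕ :=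
  ((Finset.range m).filter fun i => ∀ j, j ≤ i → w j = om).card



lemma noMatch9 {m p₁ p₂ : ℕ} {z' w : Word}
    (h : Mpat m z' w p₂) (h1 : w p₁ = z1) (h2 : isZ (w (p₁+1)))
    (h3 : ∀ i, i < p₁ → w (i+1) = om → w i = om) : False := by
  obtain ⟨hpm, ⟨t₂, ht₂, lead, blk⟩, hz1', hs', hwp, hwp1, hwe⟩ := h
  rcases lt_trichotomy p₂ p₁ with h' | h' | h'
  · have hom := h3 p₂ h' hwp1
    rw [hwp] at hom
    exact hs' hom
  · rw [h'] at hwp1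
    exact h2 hwp1
  · have hzp : z' p₁ = z1 := by
      rw [← hwe p₁ (by omega) (by omega)]; exact h1
    rcases Nat.lt_or_ge p₁ t₂ with h'' | h''
    · rw [lead p₁ h''] at hzp; exact absurd hzp (by decide)
    · rw [blk p₁ h'' h'] at hzp; exact absurd hzp (by decide)

lemma tailcase9 {m p₁ p₂ t : ℕ} {z' w : Word}
    (h1 : w p₁ = z1) (h2 : isZ (w (p₁+1)))
    (hw : ∀ i, i ≤ p₁ → w i = om → i ≤ t)
    (hw2 : ∀ i, i < t → w i = om)
    (h : Mpat m z' w p₂) : False := by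
  apply noMatch9 h h1 h2
  intro i hi hom
  have := hw (i+1) (by omega) hom
  exact hw2 i (by omega)

theorem stmt9 (m : ℕ) (x z x' z' : Word) (p₁ p₂ : ℕ)
    (hzv : Valid m z) (hxv : Valid m x)
    (hzx : Mpat m z x p₁)                 -- the edge `x ↘ z` (reversal of `(z ↗ x) ∈ M`)
    (hup : KEdge m z x' ∧ ¬ MM m z x')    -- the edge `z ↗ x'`
    (hz'v : Valid m z') (hx'v : Valid m x')
    (hz'x' : Mpat m z' x' p₂)             -- the edge `x' ↘ z'` (reversal of `(z' ↗ x')`)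
    (hL : p₁ + 2 > Oval m z + 2) :        -- `L(x ↘ z) > O(z) + 2`
    ∃ t b, 1 ≤ b ∧
      -- `z = 1…1 0^x…0^x 0^1 0^s y…` (with `t` ones and a block of `b` symbols `0^x`)
      (∀ i, i < t → z i = om) ∧ (∀ i, t ≤ i → i < t + b → z i = zx) ∧
      z (t + b) = z1 ∧ isZ (z (t + b + 1)) ∧
      -- `x' = 1…1 0^x…0^x 1 0^s y…`
      (∀ i, i ≠ t + b → x' i = z i) ∧ x' (t + b) = om ∧
      -- `z' = 1…1 0^x…0^1 0^x 0^s y…`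
      (∀ i, i ≠ t + b - 1 → i ≠ t + b → z' i = z i) ∧
      z' (t + b - 1) = z1 ∧ z' (t + b) = zx ∧
      -- `L(x ↘ z) - 1 = L(x' ↘ z')`
      p₁ + 2 - 1 = p₂ + 2 := by
  obtain ⟨hp1m, ⟨t, htp, hlead, hblk⟩, hz1, hsz, hxp, hxp1, hxe⟩ := hzx
  -- Step A : t < p₁
  have htO : t ≤ Oval m z := by
    have hsub : Finset.range t ⊆ (Finset.range m).filter fun i => ∀ j, j ≤ i → z j = om := by
      intro i hi
      simp only [Finset.mem_range] at hi
      simp only [Finset.mem_filter, Finset.mem_range]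
      exact ⟨by omega, fun j hj => hlead j (by omega)⟩
    calc t = (Finset.range t).card := (Finset.card_range t).symm
      _ ≤ _ := Finset.card_le_card hsub
  have htp1 : t < p₁ := by omega
  obtain ⟨⟨hzvK, hx'vK, q, hqm, hqZ, hx'q, hcases⟩, hnM⟩ := hup
  have htq : t ≤ q := by
    by_contra h
    exact hqZ (hlead q (by omega))
  rcases hcases with ⟨hfirst, heq⟩ | ⟨p, hpq, hpZ, hmid, hlast, hbp, heq⟩ |
    ⟨p, hpq, hpZ, hmid, hnext, hnxx, hbr, heq⟩
  · -- case 1: q is the first zero; then q = t, contradiction via tailcase9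
    exfalso
    have hqt : q = t := by
      rcases Nat.lt_or_ge t q with h | h
      · have h1 := hfirst t h
        rw [hblk t le_rfl htp1] at h1
        exact absurd h1 (by decide)
      · omega
    apply tailcase9 (t := t) (by rw [heq p₁ (by omega)]; exact hz1)
      (by rw [heq (p₁+1) (by omega)]; exact hsz) ?_ ?_ hz'x'
    · intro i hi hom
      by_contra hc
      rw [heq i (by omega)] at hom
      rcases Nat.lt_or_ge i p₁ with h' | h'
      · rw [hblk i (by omega) h'] at hom; exact absurd hom (by decide)
      · rw [show i = p₁ by omega, hz1] at hom; exact absurd hom (by decide)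
    · intro i hi
      rcases Nat.lt_or_ge i t with h' | h'
      · rw [heq i (by omega)]; exact hlead i h'
      · rw [show i = q by omega]; exact hx'q
  · -- case 2: q is the last zero
    exfalso
    rcases Nat.lt_or_ge p₁ q with hq1 | hq1
    · rcases Nat.lt_or_ge (p₁+1) q with hq2 | hq2
      · -- q > p₁+1 : then p ≥ p₁+1, tailcase9
        have hp : p₁ + 1 ≤ p := by
          by_contra h
          exact hsz (hmid (p₁+1) (by omega) (by omega))
        apply tailcase9 (t := t) (by rw [heq p₁ (by omega) (by omega)]; exact hz1) ?_ ?_ ?_ hz'x'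
        · rcases Nat.lt_or_ge (p₁+1) p with h | h
          · rw [heq (p₁+1) (by omega) (by omega)]; exact hsz
          · rw [show p₁ + 1 = p by omega, hbp]; simp [isZ]
        · intro i hi hom
          by_contra hc
          rw [heq i (by omega) (by omega)] at hom
          rcases Nat.lt_or_ge i p₁ with h' | h'
          · rw [hblk i (by omega) h'] at hom; exact absurd hom (by decide)
          · rw [show i = p₁ by omega, hz1] at hom; exact absurd hom (by decide)
        · intro i hi
          rw [heq i (by omega) (by omega)]
          exact hlead i hi
      · -- q = p₁ + 1 : then the edge is matched, contradicting hnM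
        have hq : q = p₁ + 1 := by omega
        rw [hq] at hqZ hx'q hpq hmid hlast heq
        have hpp : p = p₁ := by
          rcases Nat.lt_or_ge p p₁ with h | h
          · have := hmid p₁ (by omega) (by omega)
            rw [hz1] at this; exact absurd this (by decide)
          · omega
        rw [hpp] at hbp heq
        have hzm : z (p₁+1) = zm := by
          have hiff := hzv.2 (p₁+1) hp1m
          have hno : ¬ (z (p₁+1) = zx ∨ z (p₁+1) = z1) := by
            intro h
            obtain ⟨_, j, hj1, hj2, hj3⟩ := hiff.mp h
            exact hj3 (hlast j (by omega))
          cases hc : z (p₁+1) with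
          | zx => exact absurd (Or.inl hc) hno
          | z1 => exact absurd (Or.inr hc) hno
          | zm => rfl
          | om => exact absurd hc hsz
        exact hnM ⟨hzv, hx'v, p₁, hp1m, ⟨t, htp, hlead, hblk⟩, hz1, hsz,
          by rw [hbp, hzm], hx'q, fun i h1 h2 => heq i h1 h2⟩
    · -- q ≤ p₁ : impossible since all later letters would be ones
      exact hsz (hlast (p₁+1) (by omega))
  · -- case 3: q is a middle zero
    have hptlt : t ≤ p := by
      by_contra h
      exact hpZ (hlead p (by omega))
    rcases lt_trichotomy q p₁ with hq1 | hq1 | hq1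
    · -- q < p₁ : both z p and z q are 0^x, no edge
      exfalso
      exact hnxx ⟨hblk p hptlt (by omega), hblk q (by omega) hq1⟩
    · -- q = p₁ : the main case
      rw [hq1] at hqZ hx'q hpq hmid hnext hnxx hbr heq
      have hpp : p = p₁ - 1 := by
        rcases Nat.lt_or_ge p (p₁ - 1) with h | h
        · have := hmid (p₁-1) (by omega) (by omega)
          rw [hblk (p₁-1) (by omega) (by omega)] at this
          exact absurd this (by decide)
        · omega
      rw [hpp] at hbr heq
      have hzpzx : z (p₁ - 1) = zx := hblk (p₁-1) (by omega) (by omega)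
      have hbx : x' (p₁ - 1) = zx := by
        rcases hbr with ⟨h1, _, _⟩ | ⟨_, h2⟩
        · rw [hzpzx] at h1; exact absurd h1 (by decide)
        · exact h2
      have hx'all : ∀ i, i ≠ p₁ → x' i = z i := by
        intro i hi
        by_cases hip : i = p₁ - 1
        · rw [hip, hbx, hzpzx]
        · exact heq i (by omega) (by omega)
      obtain ⟨hp2m, ⟨t₂, ht₂, lead₂, blk₂⟩, hz'p2, hs₂, hxp2, hxp21, hxe₂⟩ := hz'x'
      have hp₂ : p₂ = p₁ - 1 := by
        by_contra hne
        have hZp2 : x' p₂ ≠ om := by rw [hxp2]; exact hs₂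
        rcases Nat.lt_or_ge p₂ p₁ with h | h
        · rcases Nat.lt_or_ge p₂ t with h' | h'
          · exact hZp2 (by rw [hx'all p₂ (by omega)]; exact hlead p₂ h')
          · have hx1 : x' (p₂+1) = zx := by
              rw [hx'all (p₂+1) (by omega)]; exact hblk (p₂+1) (by omega) (by omega)
            rw [hxp21] at hx1; exact absurd hx1 (by decide)
        · rcases Nat.eq_or_lt_of_le h with h' | h'
          · exact hZp2 (h' ▸ hx'q)
          · rcases Nat.lt_or_ge t t₂ with h'' | h''
            · have hzt := lead₂ t h''
              rw [← hxe₂ t (by omega) (by omega), hx'all t (by omega),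
                hblk t le_rfl htp1] at hzt
              exact absurd hzt (by decide)
            · have hzt := blk₂ p₁ (by omega) h'
              rw [← hxe₂ p₁ (by omega) (by omega), hx'q] at hzt
              exact absurd hzt (by decide)
      have hbe : t + (p₁ - t) = p₁ := by omega
      refine ⟨t, p₁ - t, by omega, hlead, ?_, ?_, ?_, ?_, ?_, ?_, ?_, ?_, by omega⟩
      · intro i h1 h2; exact hblk i h1 (by omega)
      · rw [hbe]; exact hz1
      · rw [hbe]; exact hsz
      · intro i hi; rw [hbe] at hi; exact hx'all i hi
      · rw [hbe]; exact hx'q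
      · intro i h1 h2
        rw [hbe] at h1 h2
        rw [← hxe₂ i (by omega) (by omega)]
        exact hx'all i h2
      · rw [hbe, show p₁ - 1 = p₂ from hp₂.symm]; exact hz'p2
      · rw [hbe, show p₁ = p₂ + 1 by omega, ← hxp2, show p₂ = p₁ - 1 from hp₂]
        exact hbx
    · -- q > p₁
      exfalso
      rcases Nat.lt_or_ge (p₁+1) q with hq2 | hq2
      · -- q > p₁ + 1 : tailcase9
        have hp : p₁ + 1 ≤ p := by
          by_contra h
          exact hsz (hmid (p₁+1) (by omega) (by omega))
        apply tailcase9 (t := t) (by rw [heq p₁ (by omega) (by omega)]; exact hz1) ?_ ?_ ?_ hz'x'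
        · rcases Nat.lt_or_ge (p₁+1) p with h | h
          · rw [heq (p₁+1) (by omega) (by omega)]; exact hsz
          · rw [show p₁ + 1 = p by omega]
            rcases hbr with ⟨_, _, h2⟩ | ⟨_, h2⟩ <;> rw [h2] <;> simp [isZ]
        · intro i hi hom
          by_contra hc
          rw [heq i (by omega) (by omega)] at hom
          rcases Nat.lt_or_ge i p₁ with h' | h'
          · rw [hblk i (by omega) h'] at hom; exact absurd hom (by decide)
          · rw [show i = p₁ by omega, hz1] at hom; exact absurd hom (by decide)
        · intro i hi
          rw [heq i (by omega) (by omega)]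
          exact hlead i hi
      · -- q = p₁ + 1 : the edge is matched, contradicting hnM
        have hq : q = p₁ + 1 := by omega
        rw [hq] at hqm hqZ hx'q hpq hmid hnext hnxx hbr heq
        have hpp : p = p₁ := by
          rcases Nat.lt_or_ge p p₁ with h | h
          · have := hmid p₁ (by omega) (by omega)
            rw [hz1] at this; exact absurd this (by decide)
          · omega
        rw [hpp] at hbr heq
        have hzq : z (p₁+1) = zx ∨ z (p₁+1) = z1 :=
          (hzv.2 (p₁+1) hqm).mpr ⟨hqZ, hnext⟩
        have hx'eq : x' p₁ = z (p₁+1) := by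
          rcases hbr with ⟨_, h2, h3⟩ | ⟨h2, h3⟩
          · rw [h3, h2]
          · rcases hzq with h | h
            · rw [h3, h]
            · exact absurd ⟨hz1, h⟩ h2
        exact hnM ⟨hzv, hx'v, p₁, hp1m, ⟨t, htp, hlead, hblk⟩, hz1, hsz,
          hx'eq, hx'q, fun i h1 h2 => heq i h1 h2⟩

end Stmt9
end

section
/- Path classification for 2-torus braids: Let M be the Morse matching on enhanced words of σ_1^m and let z = 1…1 0^x 0^x … 0^x 0 and x = 1…1 1 0^x … 0^x 0 be the unique unmatched (critical) cells in homological degrees t and t+1 respectively, with t ≥ −m+1 (so that x contains at least one 0). Then in the graph G(⟦σ_1^m⟧_Enh, M) there are exactly two directed paths from z to x: the single-edge path z ↗ x, and one longer zig-zag path that successively moves the superscript-1 marker leftwards through the block of 0^x's. In the extremal case t = −1 (x = 1…1 with no 0's) there is exactly one path from z to x, consisting of a single edge. -/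
/-!
STATEMENT 10: Path classification for 2-torus braids. Let
`z = 1…1 0^x…0^x 0` and `x = 1…1 1 0^x…0^x 0` be the unique critical cells in homological
degrees `t` and `t + 1` (i.e. with `a` resp. `a + 1` leading ones, `t = a - m`). If
`1 ≤ a` and `a ≤ m - 2` (so that `x` contains at least one zero), there are exactly two
directed paths from `z` to `x` in `G(⟦σ₁^m⟧_Enh, M)`: the single-edge path, and one longer
zig-zag path (of length `2(m - a) - 1`, successively moving the superscript-`1` marker
leftwards through the block of `0^x`'s). In the extremal case `a = m - 1` (so `x = 1…1`)
there is exactly one path, consisting of a single edge.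
-/

namespace Stmt10

/-- The symbols: `zx = 0^x`, `z1 = 0^1`, `zm = 0^-`, `om = 1^-`. -/
inductive Sym : Type
  | zx | z1 | zm | om
  deriving DecidableEq

open Sym

/-- Words are functions `ℕ → Sym`; a word of length `m` is padded with `om` beyond `m`. -/
abbrev Word : Type := ℕ → Sym

/-- A symbol is a zero-smoothing. -/
def isZ (s : Sym) : Prop := s ≠ om

/-- An enhanced word of the 2-strand braid `σ₁^m`: padded by `om` beyond `m`, and a `0`
carries superscript `x` or `1` iff it is not the last zero (the last zero carries `-`,
ones carry `-`). -/
def Valid (m : ℕ) (w : Word) : Prop :=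
  (∀ i, m ≤ i → w i = om) ∧
  ∀ i < m, ((w i = zx ∨ w i = z1) ↔ (isZ (w i) ∧ ∃ j, i < j ∧ j < m ∧ isZ (w j)))

/-- The nonzero matrix elements of the delooped Khovanov cube of `σ₁^m` between enhanced
words: `b` is obtained from `a` by changing one `0` (at index `q`) into a `1`; depending on
the position of `q` among the zeros of `a`, the corresponding dotted cobordism is nonzero
precisely in the following cases (merges of labelled circles following the Frobenius rules
`x·x = 0`, `x·1 = x`, `1·1 = 1`, merges of a labelled circle into the through-strands being
the identity or a dotted identity). -/
def KEdge (m : ℕ) (a b : Word) : Prop :=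
  Valid m a ∧ Valid m b ∧ ∃ q, q < m ∧ isZ (a q) ∧ b q = om ∧
    ( -- `q` is the first zero (possibly the only one): a circle (if any) is merged into
      -- the through-strands; all other labels are unchanged
      ((∀ i, i < q → a i = om) ∧ (∀ i, i ≠ q → b i = a i)) ∨
      -- `q` is the last zero, with a previous zero at `p`: the circle `(p, q)` is merged
      -- into the through-strands and `p` becomes the (unlabelled) last zero
      (∃ p, p < q ∧ isZ (a p) ∧ (∀ i, p < i → i < q → a i = om) ∧
        (∀ i, q < i → a i = om) ∧ b p = zm ∧
        (∀ i, i ≠ p → i ≠ q → b i = a i)) ∨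
      -- `q` is a middle zero, with previous zero `p` and a later zero: the circles
      -- `(p, q)` and `(q, next)` merge, with labels multiplied (`x·x` gives the zero
      -- morphism, hence no edge)
      (∃ p, p < q ∧ isZ (a p) ∧ (∀ i, p < i → i < q → a i = om) ∧
        (∃ j, q < j ∧ j < m ∧ isZ (a j)) ∧ ¬(a p = zx ∧ a q = zx) ∧
        ((a p = z1 ∧ a q = z1 ∧ b p = z1) ∨ (¬(a p = z1 ∧ a q = z1) ∧ b p = zx)) ∧
        (∀ i, i ≠ p → i ≠ q → b i = a i)))

/-- The matching pattern at position `p`: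
`z = 1…1 0^x…0^x 0^1 0^s y…` is matched with `x = 1…1 0^x…0^x 0^s 1 y…`. -/
def Mpat (m : ℕ) (z x : Word) (p : ℕ) : Prop :=
  p + 1 < m ∧
  (∃ t, t ≤ p ∧ (∀ i, i < t → z i = om) ∧ (∀ i, t ≤ i → i < p → z i = zx)) ∧
  z p = z1 ∧ isZ (z (p + 1)) ∧
  x p = z (p + 1) ∧ x (p + 1) = om ∧ (∀ i, i ≠ p → i ≠ p + 1 → x i = z i)

/-- The Morse matching `M` on the enhanced words of `σ₁^m`. -/
def MM (m : ℕ) (z x : Word) : Prop :=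
  Valid m z ∧ Valid m x ∧ ∃ p, Mpat m z x p

/-- The edge relation of the graph `G(⟦σ₁^m⟧_Enh, M)`: nonzero matrix elements, with the
arrows of `M` reversed. -/
def GE (m : ℕ) (a b : Word) : Prop := (KEdge m a b ∧ ¬ MM m a b) ∨ MM m b a

/-- A directed cycle. -/
def HasCycle {V : Type*} (E : V → V → Prop) : Prop :=
  ∃ (n : ℕ) (f : ℕ → V), 0 < n ∧ f n = f 0 ∧ ∀ t < n, E (f t) (f (t + 1))


/-- The critical cell with `a` leading ones: `1…1 0^x…0^x 0` (for `a < m`), or `1…1` (for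
`a = m`). -/
def critW (m a : ℕ) : Word := fun i =>
  if i < a then om else if i + 1 < m then zx else if i + 1 = m then zm else om

/-- Directed paths in `G(⟦σ₁^m⟧_Enh, M)`. -/
inductive GPath (m : ℕ) : Word → Word → Type
  | nil (a : Word) : GPath m a a
  | cons {a b c : Word} (e : GE m a b) (p : GPath m b c) : GPath m a c

/-- The length of a path. -/
def plen {m : ℕ} : ∀ {a b : Word}, GPath m a b → ℕ
  | _, _, .nil _ => 0
  | _, _, .cons _ p => plen p + 1

/-- `1…1 0^x…0^x 0@j 1…`: om before `a`, zx on `[a,j)`, zm at `j`, om after. -/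
def Aw (a j : ℕ) : Word := fun i =>
  if i < a then om else if i < j then zx else if i = j then zm else om

/-- om before `a`, zx on `[a,j)`, z1 at `j`, zx on `(j, m-1)`, zm at `m-1`. -/
def Dw (m a j : ℕ) : Word := fun i =>
  if i < a then om else if i < j then zx else if i = j then z1
  else if i + 1 < m then zx else if i + 1 = m then zm else om

/-- om before `a`, zx on `[a,j)`, om at `j`, zx on `(j, m-1)`, zm at `m-1`. -/
def Ew (m a j : ℕ) : Word := fun i =>
  if i < a then om else if i < j then zx else if i = j then om
  else if i + 1 < m then zx else if i + 1 = m then zm else om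

lemma critW_eq_Aw (m a : ℕ) (h : a + 1 ≤ m) : critW m a = Aw a (m - 1) := by
  funext i; unfold critW Aw; split_ifs <;> first | rfl | omega

lemma critW_eq_Ew (m a : ℕ) (h : a + 2 ≤ m) : critW m (a + 1) = Ew m a a := by
  funext i; unfold critW Ew; split_ifs <;> first | rfl | omega

/-- Generic validity lemma: zeros end at a last zero `L` labelled `zm`, all earlier
symbols are `om`, `zx` or `z1` and not `zm`. -/
lemma valid_gen (m : ℕ) (w : Word) (L : ℕ) (hL : L < m) (hwL : w L = zm)
    (hafter : ∀ i, L < i → w i = om)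
    (hbefore : ∀ i, i < L → (w i = om ∨ w i = zx ∨ w i = z1)) : Valid m w := by
  constructor
  · intro i hi; exact hafter i (by omega)
  · intro i him
    rcases lt_trichotomy i L with h | h | h
    · rcases hbefore i h with hv | hv | hv <;> rw [hv]
      · simp [isZ]
      · exact ⟨fun _ => ⟨by simp [isZ], L, h, hL, by rw [hwL]; simp [isZ]⟩, fun _ => by simp⟩
      · exact ⟨fun _ => ⟨by simp [isZ], L, h, hL, by rw [hwL]; simp [isZ]⟩, fun _ => by simp⟩
    · subst h; rw [hwL]
      constructor
      · rintro (hc | hc) <;> simp at hc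
      · rintro ⟨-, k, hk1, hk2, hk3⟩
        exact absurd (hafter k hk1) hk3
    · rw [hafter i h]
      constructor
      · rintro (hc | hc) <;> simp at hc
      · rintro ⟨hc, -⟩; simp [isZ] at hc

lemma valid_allom (m : ℕ) : Valid m (fun _ => om) := by
  refine ⟨fun _ _ => rfl, fun i hi => ?_⟩
  constructor
  · rintro (hc | hc) <;> simp at hc
  · rintro ⟨hc, -⟩; simp [isZ] at hc

lemma validAw (m a j : ℕ) (h1 : a ≤ j) (h2 : j < m) : Valid m (Aw a j) := by
  refine valid_gen m _ j h2 ?_ ?_ ?_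
  · unfold Aw; split_ifs <;> first | rfl | omega
  · intro i hi; unfold Aw; split_ifs <;> first | rfl | omega
  · intro i hi; unfold Aw; split_ifs <;> first | exact Or.inl rfl | exact Or.inr (Or.inl rfl) | exact Or.inr (Or.inr rfl) | omega

lemma validDw (m a j : ℕ) (h1 : a ≤ j) (h2 : j + 2 ≤ m) : Valid m (Dw m a j) := by
  refine valid_gen m _ (m - 1) (by omega) ?_ ?_ ?_
  · unfold Dw; split_ifs <;> first | rfl | omega
  · intro i hi; unfold Dw; split_ifs <;> first | rfl | omega
  · intro i hi; unfold Dw; split_ifs <;> first | exact Or.inl rfl | exact Or.inr (Or.inl rfl) | exact Or.inr (Or.inr rfl) | omega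

lemma validEw (m a j : ℕ) (h1 : a ≤ j) (h2 : j + 2 ≤ m) : Valid m (Ew m a j) := by
  refine valid_gen m _ (m - 1) (by omega) ?_ ?_ ?_
  · unfold Ew; split_ifs <;> first | rfl | omega
  · intro i hi; unfold Ew; split_ifs <;> first | rfl | omega
  · intro i hi; unfold Ew; split_ifs <;> first | exact Or.inl rfl | exact Or.inr (Or.inl rfl) | exact Or.inr (Or.inr rfl) | omega
lemma Aw_no_z1 (a j i : ℕ) : Aw a j i ≠ z1 := by
  unfold Aw; split_ifs <;> simp

lemma noMM_of_noz1 {m : ℕ} {v w : Word} (h : ∀ p, v p ≠ z1) : ¬ MM m v w := by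
  rintro ⟨-, -, p, -, -, hp, -⟩; exact h p hp

lemma Dw_z1 {m a j p : ℕ} (h1 : a ≤ j) (h : Dw m a j p = z1) : p = j := by
  unfold Dw at h; split_ifs at h <;> simp_all

/-- The edge `z = A(m-1) → A(m-2)` (last zero merged towards `m-2`). -/
lemma e1 (m a : ℕ) (h2 : a + 2 ≤ m) : GE m (Aw a (m - 1)) (Aw a (m - 2)) := by
  left
  refine ⟨⟨validAw m a (m-1) (by omega) (by omega), validAw m a (m-2) (by omega) (by omega),
    m - 1, by omega, ?_, ?_, Or.inr (Or.inl ⟨m - 2, by omega, ?_, ?_, ?_, ?_, ?_⟩)⟩,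
    noMM_of_noz1 (fun p => Aw_no_z1 a (m-1) p)⟩
  · show isZ (Aw a (m-1) (m-1)); unfold Aw isZ; split_ifs <;> simp_all <;> omega
  · unfold Aw; split_ifs <;> first | rfl | omega
  · show isZ (Aw a (m-1) (m-2)); unfold Aw isZ; split_ifs <;> simp_all <;> omega
  · intro i hi1 hi2; omega
  · intro i hi; unfold Aw; split_ifs <;> first | rfl | omega
  · unfold Aw; split_ifs <;> first | rfl | omega
  · intro i hi1 hi2; unfold Aw; split_ifs <;> first | rfl | omega

/-- The matching pair `D(m-2) ↘ A(m-2)`, giving the reversed edge `A(m-2) → D(m-2)`. -/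
lemma mm2 (m a : ℕ) (h2 : a + 2 ≤ m) : MM m (Dw m a (m - 2)) (Aw a (m - 2)) := by
  refine ⟨validDw m a (m-2) (by omega) (by omega), validAw m a (m-2) (by omega) (by omega),
    m - 2, by omega, ⟨a, by omega, ?_, ?_⟩, ?_, ?_, ?_, ?_, ?_⟩
  · intro i hi; unfold Dw; split_ifs <;> first | rfl | omega
  · intro i hi1 hi2; unfold Dw; split_ifs <;> first | rfl | omega
  · unfold Dw; split_ifs <;> first | rfl | omega
  · show isZ (Dw m a (m-2) (m-2+1)); unfold Dw isZ; split_ifs <;> simp_all <;> omega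
  · unfold Dw Aw; split_ifs <;> first | rfl | omega
  · unfold Aw; split_ifs <;> first | rfl | omega
  · intro i hi1 hi2; unfold Aw Dw; split_ifs <;> first | rfl | omega

lemma e2 (m a : ℕ) (h2 : a + 2 ≤ m) : GE m (Aw a (m - 2)) (Dw m a (m - 2)) :=
  Or.inr (mm2 m a h2)

/-- The edge `D j → E j` (merge the `0^1` at `j` into the next circle / through-strands). -/
lemma e3 (m a j : ℕ) (h1 : a ≤ j) (h2 : j + 2 ≤ m) : GE m (Dw m a j) (Ew m a j) := by
  left
  constructor
  · refine ⟨validDw m a j h1 h2, validEw m a j h1 h2, j, by omega, ?_, ?_, ?_⟩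
    · show isZ (Dw m a j j); unfold Dw isZ; split_ifs <;> simp_all <;> omega
    · unfold Ew; split_ifs <;> first | rfl | omega
    · rcases Nat.eq_or_lt_of_le h1 with he | hlt
      · -- j = a : first zero
        subst he
        refine Or.inl ⟨?_, ?_⟩
        · intro i hi; unfold Dw; split_ifs <;> first | rfl | omega
        · intro i hi; unfold Ew Dw; split_ifs <;> first | rfl | omega
      · -- a < j : middle zero
        refine Or.inr (Or.inr ⟨j - 1, by omega, ?_, by omega, ⟨m - 1, by omega, by omega, ?_⟩,
          ?_, Or.inr ⟨?_, ?_⟩, ?_⟩)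
        · show isZ (Dw m a j (j-1)); unfold Dw isZ; split_ifs <;> simp_all <;> omega
        · show isZ (Dw m a j (m-1)); unfold Dw isZ; split_ifs <;> simp_all <;> omega
        · rintro ⟨-, hc⟩
          unfold Dw at hc; split_ifs at hc <;> simp_all
        · rintro ⟨hc, -⟩
          unfold Dw at hc; split_ifs at hc <;> simp_all <;> omega
        · unfold Ew; split_ifs <;> first | rfl | omega
        · intro i hi1 hi2; unfold Ew Dw; split_ifs <;> first | rfl | omega
  · rintro ⟨-, -, p, -, -, hz1, hZ, hval, -⟩
    have hp := Dw_z1 h1 hz1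
    subst hp
    have : Ew m a p p = om := by unfold Ew; split_ifs <;> first | rfl | omega
    rw [this] at hval
    exact hZ hval.symm

/-- The matching pair `D j ↘ E (j+1)`, giving the reversed edge `E (j+1) → D j`. -/
lemma mm4 (m a j : ℕ) (h1 : a ≤ j) (h2 : j + 3 ≤ m) : MM m (Dw m a j) (Ew m a (j + 1)) := by
  refine ⟨validDw m a j h1 (by omega), validEw m a (j+1) (by omega) (by omega),
    j, by omega, ⟨a, by omega, ?_, ?_⟩, ?_, ?_, ?_, ?_, ?_⟩
  · intro i hi; unfold Dw; split_ifs <;> first | rfl | omega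
  · intro i hi1 hi2; unfold Dw; split_ifs <;> first | rfl | omega
  · unfold Dw; split_ifs <;> first | rfl | omega
  · show isZ (Dw m a j (j+1)); unfold Dw isZ; split_ifs <;> simp_all <;> omega
  · unfold Dw Ew; split_ifs <;> first | rfl | omega
  · unfold Ew; split_ifs <;> first | rfl | omega
  · intro i hi1 hi2; unfold Ew Dw; split_ifs <;> first | rfl | omega

lemma e4 (m a j : ℕ) (h1 : a ≤ j) (h2 : j + 3 ≤ m) : GE m (Ew m a (j + 1)) (Dw m a j) :=
  Or.inr (mm4 m a j h1 h2)

/-- The direct edge `z → x`. -/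
lemma e0 (m a : ℕ) (h2 : a + 2 ≤ m) : GE m (Aw a (m - 1)) (Ew m a a) := by
  left
  refine ⟨⟨validAw m a (m-1) (by omega) (by omega), validEw m a a le_rfl h2,
    a, by omega, ?_, ?_, Or.inl ⟨?_, ?_⟩⟩, noMM_of_noz1 (fun p => Aw_no_z1 a (m-1) p)⟩
  · show isZ (Aw a (m-1) a); unfold Aw isZ; split_ifs <;> simp_all <;> omega
  · unfold Ew; split_ifs <;> first | rfl | omega
  · intro i hi; unfold Aw; split_ifs <;> first | rfl | omega
  · intro i hi; unfold Ew Aw; split_ifs <;> first | rfl | omega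

/-- The extremal edge `1…10 → 1…1`. -/
lemma e5 (m : ℕ) (hm : 1 ≤ m) : GE m (Aw (m - 1) (m - 1)) (fun _ => om) := by
  left
  refine ⟨⟨validAw m (m-1) (m-1) le_rfl (by omega), valid_allom m,
    m - 1, by omega, ?_, rfl, Or.inl ⟨?_, ?_⟩⟩,
    noMM_of_noz1 (fun p => Aw_no_z1 (m-1) (m-1) p)⟩
  · show isZ (Aw (m-1) (m-1) (m-1)); unfold Aw isZ; split_ifs <;> simp_all <;> omega
  · intro i hi; unfold Aw; split_ifs <;> first | rfl | omega
  · intro i hi; show om = Aw (m-1) (m-1) i; unfold Aw; split_ifs <;> first | rfl | omega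
/-- The first `k` symbols are `om` (through-strands). -/
def Pre (k : ℕ) (w : Word) : Prop := ∀ i, i < k → w i = om

lemma Ew_no_z1 (m a j i : ℕ) : Ew m a j i ≠ z1 := by
  unfold Ew; split_ifs <;> simp

lemma sym_zm {s : Sym} (h1 : isZ s) (h2 : ¬(s = zx ∨ s = z1)) : s = zm := by
  cases s <;> simp_all [isZ]

/-- `Pre k` is preserved along edges of the graph. -/
lemma pre_step {m k : ℕ} {v w : Word} (e : GE m v w) (h : Pre k v) : Pre k w := by
  rcases e with ⟨⟨-, -, q, hq, hZq, hbq, hcase⟩, -⟩ | ⟨-, -, p, -, -, hz1, hZ, hxp, hxp1, hoff⟩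
  · intro i hi
    by_cases hiq : i = q
    · subst hiq; exact hbq
    rcases hcase with ⟨-, hoff⟩ | ⟨p, hpq, hZp, -, -, hbp, hoff⟩ |
        ⟨p, hpq, hZp, -, -, -, -, hoff⟩
    · rw [hoff i hiq]; exact h i hi
    · by_cases hip : i = p
      · subst hip; exact absurd (h i hi) hZp
      · rw [hoff i hip hiq]; exact h i hi
    · by_cases hip : i = p
      · subst hip; exact absurd (h i hi) hZp
      · rw [hoff i hip hiq]; exact h i hi
  · -- reversed matching edge: `w` is the lower element, `v` the upper
    intro i hi
    by_cases hip : i = p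
    · subst hip
      exact absurd (hxp ▸ h i hi) hZ
    by_cases hip1 : i = p + 1
    · subst hip1
      have : p < k := by omega
      exact absurd (hxp ▸ h p this) hZ
    · rw [← hoff i hip hip1]; exact h i hi

lemma pre_path {m k : ℕ} {v w : Word} (p : GPath m v w) (h : Pre k v) : Pre k w := by
  induction p with
  | nil a => exact h
  | cons e p ih => exact ih (pre_step e h)

/-- In-edges of `x = Ew a`: only from `z = Aw a (m-1)` and `Dw a`. -/
lemma inX {m a : ℕ} {v : Word} (h2 : a + 2 ≤ m) (e : GE m v (Ew m a a))
    (hpre : Pre a v) : v = Aw a (m - 1) ∨ v = Dw m a a := by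
  rcases e with ⟨⟨hVa, hVb, q, hq, hZq, hbq, hcase⟩, hnm⟩ | hmm
  swap
  · exact absurd hmm (noMM_of_noz1 (fun p => Ew_no_z1 m a a p))
  have hqa : q = a := by
    have h1 : q < a ∨ q = a := by
      unfold Ew at hbq; split_ifs at hbq <;> simp_all <;> omega
    rcases h1 with h1 | h1
    · exact absurd (hpre q h1) hZq
    · exact h1
  subst hqa
  rcases hcase with ⟨hfz, hoff⟩ | ⟨p, hpq, hZp, -⟩ | ⟨p, hpq, hZp, -⟩
  · -- first-zero case
    have hlast : v (m - 1) = zm := by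
      rw [← hoff (m-1) (by omega)]
      unfold Ew; split_ifs <;> first | rfl | omega
    have hv : v q = zx ∨ v q = z1 := by
      refine (hVa.2 q (by omega)).mpr ⟨hZq, m - 1, by omega, by omega, ?_⟩
      rw [hlast]; simp [isZ]
    rcases hv with hv | hv
    · left; funext i
      by_cases hiq : i = q
      · subst hiq; rw [hv]; unfold Aw; split_ifs <;> first | rfl | omega
      · rw [← hoff i hiq]; unfold Ew Aw; split_ifs <;> first | rfl | omega
    · right; funext i
      by_cases hiq : i = q
      · subst hiq; rw [hv]; unfold Dw; split_ifs <;> first | rfl | omega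
      · rw [← hoff i hiq]; unfold Ew Dw; split_ifs <;> first | rfl | omega
  · exact absurd (hpre p (by omega)) hZp
  · exact absurd (hpre p (by omega)) hZp

/-- In-edges of `Ew j` for `a < j`: only from `Dw j`. -/
lemma inE {m a j : ℕ} {v : Word} (h1 : a < j) (h2 : j + 2 ≤ m) (e : GE m v (Ew m a j))
    (hpre : Pre a v) : v = Dw m a j := by
  rcases e with ⟨⟨hVa, hVb, q, hq, hZq, hbq, hcase⟩, hnm⟩ | hmm
  swap
  · exact absurd hmm (noMM_of_noz1 (fun p => Ew_no_z1 m a j p))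
  have hqj : q = j := by
    have hx : q < a ∨ q = j := by
      unfold Ew at hbq; split_ifs at hbq <;> simp_all <;> omega
    rcases hx with hx | hx
    · exact absurd (hpre q hx) hZq
    · exact hx
  subst hqj
  rcases hcase with ⟨hfz, hoff⟩ | ⟨p, hpq, hZp, hmid, haft, hbp, hoff⟩ |
      ⟨p, hpq, hZp, hmid, hlater, hnxx, hlab, hoff⟩
  · -- first-zero: impossible, `v a = zx`
    have hva : v a = om := hfz a h1
    have hx : Ew m a q a = v a := hoff a (by omega)
    rw [hva] at hx
    unfold Ew at hx; split_ifs at hx <;> simp_all <;> omega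
  · -- last-zero: impossible, `v (m-1) = zm`
    have hvm : v (m - 1) = om := haft (m - 1) (by omega)
    have hx : Ew m a q (m - 1) = v (m - 1) := hoff (m - 1) (by omega) (by omega)
    rw [hvm] at hx
    unfold Ew at hx; split_ifs at hx <;> simp_all <;> omega
  · -- middle case
    have hpa : a ≤ p := by
      by_contra hc
      exact absurd (hpre p (by omega)) hZp
    have hpj : p = q - 1 := by
      by_contra hc
      have h5 : p + 1 < q := by omega
      have h6 : v (p + 1) = om := hmid (p + 1) (by omega) h5
      have h7 : Ew m a q (p + 1) = v (p + 1) := hoff (p + 1) (by omega) (by omega)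
      rw [h6] at h7
      unfold Ew at h7; split_ifs at h7 <;> simp_all <;> omega
    subst hpj
    have hbpx : Ew m a q (q - 1) = zx := by
      unfold Ew; split_ifs <;> first | rfl | omega
    have hlab' : ¬(v (q-1) = z1 ∧ v q = z1) := by
      rcases hlab with ⟨-, -, hc⟩ | ⟨hc, -⟩
      · rw [hbpx] at hc; simp at hc
      · exact hc
    have hlast : v (m - 1) = zm := by
      rw [← hoff (m-1) (by omega) (by omega)]
      unfold Ew; split_ifs <;> first | rfl | omega
    have hlZ : isZ (v (m - 1)) := by rw [hlast]; simp [isZ]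
    have hvp : v (q-1) = zx ∨ v (q-1) = z1 :=
      (hVa.2 (q-1) (by omega)).mpr ⟨hZp, m - 1, by omega, by omega, hlZ⟩
    have hvq : v q = zx ∨ v q = z1 :=
      (hVa.2 q (by omega)).mpr ⟨hZq, m - 1, by omega, by omega, hlZ⟩
    rcases hvp with hvp | hvp
    · rcases hvq with hvq | hvq
      · exact absurd ⟨hvp, hvq⟩ hnxx
      · -- (zx, z1) : v = Dw q
        funext i
        by_cases hij : i = q
        · subst hij; rw [hvq]; unfold Dw; split_ifs <;> first | rfl | omega
        by_cases hip : i = q - 1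
        · subst hip; rw [hvp]; unfold Dw; split_ifs <;> first | rfl | omega
        · rw [← hoff i hip hij]; unfold Ew Dw; split_ifs <;> first | rfl | omega
    · rcases hvq with hvq | hvq
      · -- (z1, zx) : v = Dw (q-1), but that edge is the matching, excluded
        exfalso
        apply hnm
        have hv : v = Dw m a (q - 1) := by
          funext i
          by_cases hij : i = q
          · subst hij; rw [hvq]; unfold Dw; split_ifs <;> first | rfl | omega
          by_cases hip : i = q - 1
          · subst hip; rw [hvp]; unfold Dw; split_ifs <;> first | rfl | omega
          · rw [← hoff i hip hij]; unfold Ew Dw; split_ifs <;> first | rfl | omega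
        rw [hv]
        have hmm4 := mm4 m a (q - 1) (by omega) (by omega)
        rwa [show q - 1 + 1 = q by omega] at hmm4
      · exact absurd ⟨hvp, hvq⟩ hlab'

/-- In-edges of `Dw j` (for `j + 3 ≤ m`): only from `Ew (j+1)` (reversed matching). -/
lemma inD {m a j : ℕ} {v : Word} (h1 : a ≤ j) (h2 : j + 3 ≤ m) (e : GE m v (Dw m a j))
    (hpre : Pre a v) : v = Ew m a (j + 1) := by
  rcases e with ⟨⟨hVa, hVb, q, hq, hZq, hbq, hcase⟩, hnm⟩ | hmm
  · exfalso
    have hx : q < a := by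
      unfold Dw at hbq; split_ifs at hbq <;> simp_all <;> omega
    exact absurd (hpre q hx) hZq
  · obtain ⟨-, -, p, hp1, hprefix, hz1, hZ, hxp, hxp1, hoff⟩ := hmm
    have hpj : p = j := Dw_z1 h1 hz1
    subst hpj
    have hd1 : Dw m a p (p + 1) = zx := by
      unfold Dw; split_ifs <;> first | rfl | omega
    funext i
    by_cases hij : i = p
    · subst hij; rw [hxp, hd1]; unfold Ew; split_ifs <;> first | rfl | omega
    by_cases hij1 : i = p + 1
    · subst hij1; rw [hxp1]; unfold Ew; split_ifs <;> first | rfl | omega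
    · rw [hoff i hij hij1]; unfold Dw Ew; split_ifs <;> first | rfl | omega

/-- In-edges of `Dw (m-2)`: only from `Aw (m-2)` (reversed matching). -/
lemma inD2 {m a : ℕ} {v : Word} (h2 : a + 2 ≤ m) (e : GE m v (Dw m a (m - 2)))
    (hpre : Pre a v) : v = Aw a (m - 2) := by
  rcases e with ⟨⟨hVa, hVb, q, hq, hZq, hbq, hcase⟩, hnm⟩ | hmm
  · exfalso
    have : q < a := by
      unfold Dw at hbq; split_ifs at hbq <;> simp_all <;> omega
    exact absurd (hpre q this) hZq
  · obtain ⟨-, -, p, hp1, hprefix, hz1, hZ, hxp, hxp1, hoff⟩ := hmm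
    have hpj : p = m - 2 := Dw_z1 (by omega) hz1
    subst hpj
    have hd1 : Dw m a (m - 2) (m - 2 + 1) = zm := by
      unfold Dw; split_ifs <;> first | rfl | omega
    funext i
    by_cases hij : i = m - 2
    · subst hij; rw [hxp, hd1]; unfold Aw; split_ifs <;> first | rfl | omega
    by_cases hij1 : i = m - 2 + 1
    · subst hij1; rw [hxp1]; unfold Aw; split_ifs <;> first | rfl | omega
    · rw [hoff i hij hij1]; unfold Dw Aw; split_ifs <;> first | rfl | omega

/-- In-edges of `Aw (m-2)`: only from `z = Aw (m-1)`. -/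
lemma inA {m a : ℕ} {v : Word} (h2 : a + 2 ≤ m) (e : GE m v (Aw a (m - 2)))
    (hpre : Pre a v) : v = Aw a (m - 1) := by
  rcases e with ⟨⟨hVa, hVb, q, hq, hZq, hbq, hcase⟩, hnm⟩ | hmm
  swap
  · exact absurd hmm (noMM_of_noz1 (fun p => Aw_no_z1 a (m-2) p))
  have hqm : q = m - 1 := by
    have hx : q < a ∨ q = m - 1 := by
      unfold Aw at hbq; split_ifs at hbq <;> simp_all <;> omega
    rcases hx with hx | hx
    · exact absurd (hpre q hx) hZq
    · exact hx
  subst hqm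
  rcases hcase with ⟨hfz, hoff⟩ | ⟨p, hpq, hZp, hmid, haft, hbp, hoff⟩ |
      ⟨p, hpq, hZp, hmid, ⟨k, hk1, hk2, -⟩, -⟩
  · -- first-zero: impossible since `v a ≠ om`
    exfalso
    have hva : v a = om := hfz a (by omega)
    have : Aw a (m - 2) a = v a := hoff a (by omega)
    rw [hva] at this
    unfold Aw at this; split_ifs at this <;> simp_all <;> omega
  · -- last-zero case: `p = m-2`
    have hpm : p = m - 2 := by
      have := hbp
      unfold Aw at this; split_ifs at this <;> simp_all <;> omega
    subst hpm
    have hnolater : ¬(v (m-1) = zx ∨ v (m-1) = z1) := by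
      intro hc
      rcases (hVa.2 (m-1) (by omega)).mp hc with ⟨-, k, hk1, hk2, -⟩
      omega
    have hlast : v (m - 1) = zm := sym_zm hZq hnolater
    have hvp : v (m-2) = zx ∨ v (m-2) = z1 := by
      refine (hVa.2 (m-2) (by omega)).mpr ⟨hZp, m - 1, by omega, by omega, ?_⟩
      rw [hlast]; simp [isZ]
    rcases hvp with hvp | hvp
    · funext i
      by_cases hi1 : i = m - 1
      · subst hi1; rw [hlast]; unfold Aw; split_ifs <;> first | rfl | omega
      by_cases hi2 : i = m - 2
      · subst hi2; rw [hvp]; unfold Aw; split_ifs <;> first | rfl | omega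
      · rw [← hoff i hi2 hi1]; unfold Aw; split_ifs <;> first | rfl | omega
    · -- v = Dw (m-2): the matching pair, excluded
      exfalso
      apply hnm
      have hv : v = Dw m a (m - 2) := by
        funext i
        by_cases hi1 : i = m - 1
        · subst hi1; rw [hlast]; unfold Dw; split_ifs <;> first | rfl | omega
        by_cases hi2 : i = m - 2
        · subst hi2; rw [hvp]; unfold Dw; split_ifs <;> first | rfl | omega
        · rw [← hoff i hi2 hi1]; unfold Aw Dw; split_ifs <;> first | rfl | omega
      rw [hv]
      exact mm2 m a h2
  · omega

/-- No in-edges of `z = Aw (m-1)` from `Pre a` words. -/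
lemma inZ {m a : ℕ} {v : Word} (e : GE m v (Aw a (m - 1))) (hpre : Pre a v) : False := by
  rcases e with ⟨⟨hVa, hVb, q, hq, hZq, hbq, hcase⟩, hnm⟩ | hmm
  swap
  · exact absurd hmm (noMM_of_noz1 (fun p => Aw_no_z1 a (m-1) p))
  have : q < a := by
    unfold Aw at hbq; split_ifs at hbq <;> simp_all <;> omega
  exact absurd (hpre q this) hZq

/-- In-edges of the extremal `x = 1…1`: only from `1…10`. -/
lemma inOm {m : ℕ} {v : Word} (hm : 1 ≤ m) (e : GE m v (fun _ => om))
    (hpre : Pre (m - 1) v) : v = Aw (m - 1) (m - 1) := by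
  rcases e with ⟨⟨hVa, hVb, q, hq, hZq, hbq, hcase⟩, hnm⟩ | ⟨-, -, p, -, -, hz1, -⟩
  swap
  · simp at hz1
  rcases hcase with ⟨hfz, hoff⟩ | ⟨p, hpq, hZp, hmid, haft, hbp, hoff⟩ |
      ⟨p, hpq, hZp, hmid, hlater, hnxx, hlab, hoff⟩
  · have hqm : q = m - 1 := by
      by_contra hc
      exact absurd (hpre q (by omega)) hZq
    subst hqm
    have hnolater : ¬(v (m-1) = zx ∨ v (m-1) = z1) := by
      intro hc
      rcases (hVa.2 (m-1) (by omega)).mp hc with ⟨-, k, hk1, hk2, hk3⟩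
      exact hk3 (hoff k (by omega)).symm
    have hlast : v (m - 1) = zm := sym_zm hZq hnolater
    funext i
    by_cases hi : i = m - 1
    · subst hi; rw [hlast]; unfold Aw; split_ifs <;> first | rfl | omega
    · rw [← hoff i hi]; unfold Aw; split_ifs <;> first | rfl | omega
  · simp at hbp
  · rcases hlab with ⟨-, -, hc⟩ | ⟨-, hc⟩ <;> simp at hc
/-- The vertices of the canonical zig-zag path, indexed by distance from `x = Ew a`. -/
def CanonV (m a : ℕ) : ℕ → Word
  | 0 => Ew m a a
  | (t+1) =>
    if t + 2 = 2*(m-a) then Aw a (m-1)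
    else if t + 3 = 2*(m-a) then Aw a (m-2)
    else if t % 2 = 0 then Dw m a (a + t/2)
    else Ew m a (a + t/2 + 1)

lemma cv_succ (m a t : ℕ) : CanonV m a (t+1) =
    if t + 2 = 2*(m-a) then Aw a (m-1)
    else if t + 3 = 2*(m-a) then Aw a (m-2)
    else if t % 2 = 0 then Dw m a (a + t/2)
    else Ew m a (a + t/2 + 1) := rfl

lemma cv_top (m a t : ℕ) (h : t + 2 = 2*(m-a)) : CanonV m a (t+1) = Aw a (m-1) := by
  rw [cv_succ, if_pos h]

lemma cv_top2 (m a t : ℕ) (h : t + 3 = 2*(m-a)) : CanonV m a (t+1) = Aw a (m-2) := by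
  rw [cv_succ, if_neg (by omega), if_pos h]

lemma cv_D (m a t : ℕ) (he : t % 2 = 0) (h : t + 3 ≤ 2*(m-a)) :
    CanonV m a (t+1) = Dw m a (a + t/2) := by
  rw [cv_succ, if_neg (by omega), if_neg (by omega), if_pos he]

lemma cv_E (m a t : ℕ) (he : t % 2 = 1) (h : t + 4 ≤ 2*(m-a)) :
    CanonV m a (t+1) = Ew m a (a + t/2 + 1) := by
  rw [cv_succ, if_neg (by omega), if_neg (by omega), if_neg (by omega)]

/-- The consecutive edges of the canonical path. -/
lemma edgeC (m a : ℕ) (h2 : a + 2 ≤ m) (t : ℕ) (h : t + 2 ≤ 2*(m-a)) :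
    GE m (CanonV m a (t+1)) (CanonV m a t) := by
  rcases Nat.eq_or_lt_of_le h with htop | hlt
  · -- top edge z → A(m-2)
    rw [cv_top m a t htop]
    rcases Nat.eq_or_lt_of_le (show 1 ≤ t by omega) with h1 | h1
    · exfalso; omega
    · obtain ⟨t', rfl⟩ : ∃ t', t = t' + 1 := ⟨t - 1, by omega⟩
      rw [cv_top2 m a t' (by omega)]
      exact e1 m a h2
  · rcases Nat.eq_or_lt_of_le (show t + 3 ≤ 2*(m-a) by omega) with htop2 | hlt2
    · -- edge A(m-2) → D(m-2)
      rw [cv_top2 m a t htop2]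
      obtain ⟨t', rfl⟩ : ∃ t', t = t' + 1 := ⟨t - 1, by omega⟩
      rw [cv_D m a t' (by omega) (by omega)]
      have hj : a + t' / 2 = m - 2 := by omega
      rw [hj]
      exact e2 m a h2
    · -- middle edges
      have hd1 := Nat.div_add_mod t 2
      by_cases hpar : t % 2 = 0
      · -- D j → E j
        rw [cv_D m a t hpar (by omega)]
        have hE : CanonV m a t = Ew m a (a + t/2) := by
          rcases Nat.eq_zero_or_pos t with rfl | hpos
          · simp [CanonV]
          · obtain ⟨t', rfl⟩ : ∃ t', t = t' + 1 := ⟨t - 1, by omega⟩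
            have hd2 := Nat.div_add_mod t' 2
            rw [cv_E m a t' (by omega) (by omega)]
            have hj : a + (t'+1)/2 = a + t'/2 + 1 := by omega
            rw [hj]
        rw [hE]
        exact e3 m a (a + t/2) (by omega) (by omega)
      · -- E (j+1) → D j
        rw [cv_E m a t (by omega) (by omega)]
        obtain ⟨t', rfl⟩ : ∃ t', t = t' + 1 := ⟨t - 1, by omega⟩
        have hd1 := Nat.div_add_mod t' 2
        have hd2 := Nat.div_add_mod (t'+1) 2
        rw [cv_D m a t' (by omega) (by omega)]
        have hj : a + (t' + 1) / 2 + 1 = (a + t' / 2) + 1 := by omega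
        rw [hj]
        exact e4 m a (a + t'/2) (by omega) (by omega)

/-- The canonical zig-zag path from `CanonV t` down to `x = Ew a`. -/
def cp (m a : ℕ) (h2 : a + 2 ≤ m) : (t : ℕ) → t + 1 ≤ 2*(m-a) → GPath m (CanonV m a t) (Ew m a a)
  | 0, _ => GPath.nil _
  | (t+1), h => GPath.cons (edgeC m a h2 t h) (cp m a h2 t (by omega))

lemma plen_cp (m a : ℕ) (h2 : a + 2 ≤ m) : ∀ (t : ℕ) (h : t + 1 ≤ 2*(m-a)),
    plen (cp m a h2 t h) = t
  | 0, _ => rfl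
  | (t+1), h => by
    show plen (cp m a h2 t (by omega)) + 1 = t + 1
    rw [plen_cp m a h2 t (by omega)]

/-- `z` occurs in the canonical chain only at the top index. -/
lemma cv_ne_z (m a t : ℕ) (h2 : a + 2 ≤ m) (h : t + 2 ≤ 2*(m-a)) :
    CanonV m a t ≠ Aw a (m-1) := by
  intro hc
  rcases Nat.eq_zero_or_pos t with rfl | hpos
  · have hx := congrFun hc a
    simp only [CanonV] at hx
    unfold Ew Aw at hx
    split_ifs at hx <;> simp_all <;> omega
  obtain ⟨t', rfl⟩ : ∃ t', t = t' + 1 := ⟨t - 1, by omega⟩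
  rw [cv_succ] at hc
  split_ifs at hc with hi1 hi2 hi3
  · omega
  · have hx := congrFun hc (m - 2)
    unfold Aw at hx
    split_ifs at hx <;> simp_all <;> omega
  · exact Aw_no_z1 a (m-1) (a + t'/2) (by
      have hx := congrFun hc (a + t'/2)
      rw [← hx]
      unfold Dw; split_ifs <;> first | rfl | omega)
  · have hx := congrFun hc (a + t'/2 + 1)
    have hb : a + t'/2 + 1 < m - 1 := by omega
    unfold Ew Aw at hx
    split_ifs at hx <;> simp_all <;> omega

/-- Classification of in-edges along the canonical chain. -/
lemma inC (m a : ℕ) (h2 : a + 2 ≤ m) (t : ℕ) (ht : t + 1 ≤ 2*(m-a)) {v : Word}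
    (e : GE m v (CanonV m a t)) (hpre : Pre a v) :
    (t + 2 ≤ 2*(m-a) ∧ v = CanonV m a (t+1)) ∨ (t = 0 ∧ v = Aw a (m-1)) := by
  rcases Nat.eq_zero_or_pos t with rfl | hpos
  · -- t = 0 : in-edges of x
    have e' : GE m v (Ew m a a) := e
    rcases inX h2 e' hpre with h | h
    · exact Or.inr ⟨rfl, h⟩
    · refine Or.inl ⟨by omega, ?_⟩
      rw [cv_D m a 0 rfl (by omega)]
      simpa using h
  obtain ⟨t', rfl⟩ : ∃ t', t = t' + 1 := ⟨t - 1, by omega⟩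
  rcases Nat.eq_or_lt_of_le ht with htop | hlt
  · -- t = T : no in-edges of z
    rw [cv_top m a t' (by omega)] at e
    exact absurd hpre (fun h => inZ e h)
  rcases Nat.eq_or_lt_of_le (show t' + 3 ≤ 2*(m-a) by omega) with htop2 | hlt2
  · -- t = T - 1 : in-edges of A(m-2)
    rw [cv_top2 m a t' htop2] at e
    refine Or.inl ⟨by omega, ?_⟩
    rw [cv_top m a (t'+1) (by omega)]
    exact inA h2 e hpre
  have hd1 := Nat.div_add_mod t' 2
  have hd2 := Nat.div_add_mod (t'+1) 2
  by_cases hpar : t' % 2 = 0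
  · -- CanonV (t'+1) = D j
    rw [cv_D m a t' hpar (by omega)] at e
    rcases Nat.eq_or_lt_of_le (show t' + 4 ≤ 2*(m-a) by omega) with htop3 | hlt3
    · -- j = m - 2 : in-edge from A(m-2)
      have hj : a + t'/2 = m - 2 := by omega
      rw [hj] at e
      refine Or.inl ⟨by omega, ?_⟩
      rw [cv_top2 m a (t'+1) (by omega)]
      exact inD2 h2 e hpre
    · -- j < m - 2 : in-edge from E (j+1)
      refine Or.inl ⟨by omega, ?_⟩
      rw [cv_E m a (t'+1) (by omega) (by omega)]
      have hv := inD (show a ≤ a + t'/2 by omega) (show (a + t'/2) + 3 ≤ m by omega) e hpre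
      have hj : a + (t'+1)/2 + 1 = a + t'/2 + 1 := by omega
      rw [hj]
      exact hv
  · -- CanonV (t'+1) = E j
    rw [cv_E m a t' (by omega) (by omega)] at e
    refine Or.inl ⟨by omega, ?_⟩
    rw [cv_D m a (t'+1) (by omega) (by omega)]
    have hv := inE (show a < a + t'/2 + 1 by omega) (show (a + t'/2 + 1) + 2 ≤ m by omega) e hpre
    have hj : a + (t'+1)/2 = a + t'/2 + 1 := by omega
    rw [hj]
    exact hv

lemma pre_Aw (a j : ℕ) : Pre a (Aw a j) := by
  intro i hi; unfold Aw; rw [if_pos hi]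

/-- The main classification of all paths into `x`. -/
lemma mainLem (m a : ℕ) (h2 : a + 2 ≤ m) :
    ∀ (v w : Word) (q : GPath m v w), w = Ew m a a → Pre a v →
    (∃ (t : ℕ) (ht : t + 1 ≤ 2*(m-a)) (_ : v = CanonV m a t), HEq q (cp m a h2 t ht)) ∨
    (v = Aw a (m-1) ∧ w = Ew m a a ∧
      HEq q (GPath.cons (e0 m a h2) (GPath.nil (Ew m a a)))) := by
  intro v w q
  induction q with
  | nil u =>
    intro hw hpre
    subst hw
    exact Or.inl ⟨0, by omega, rfl, HEq.rfl⟩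
  | cons e q' ih =>
    intro hw hpre
    rename_i vv bb ww
    have hpb : Pre a bb := pre_step e hpre
    rcases ih hw hpb with ⟨t, ht, hb, hq'⟩ | ⟨hb, hw', hq'⟩
    · subst hb
      subst hw
      have hq'' : q' = cp m a h2 t ht := eq_of_heq hq'
      subst hq''
      rcases inC m a h2 t ht e hpre with ⟨ht2, hv⟩ | ⟨ht0, hv⟩
      · subst hv
        exact Or.inl ⟨t + 1, by omega, rfl, heq_of_eq rfl⟩
      · subst ht0
        subst hv
        exact Or.inr ⟨rfl, rfl, heq_of_eq rfl⟩
    · subst hb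
      subst hw
      exact absurd hpre (fun h => inZ e h)
lemma critW_eq_om (m : ℕ) : critW m m = (fun _ => om) := by
  funext i; unfold critW; split_ifs <;> first | rfl | omega

lemma plen_heq {m : ℕ} {u u' x : Word} (h : u = u') {q : GPath m u x} {q' : GPath m u' x}
    (hq : HEq q q') : plen q = plen q' := by
  subst h; rw [eq_of_heq hq]

/-- Classification of all paths into the extremal `x = 1…1`. -/
lemma mainX (m : ℕ) (hm : 1 ≤ m) :
    ∀ (v w : Word) (q : GPath m v w), w = (fun _ => om) → Pre (m-1) v →
    (v = (fun _ : ℕ => om) ∧ w = (fun _ : ℕ => om) ∧ HEq q (GPath.nil (m := m) (fun _ : ℕ => om))) ∨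
    (v = Aw (m-1) (m-1) ∧ w = (fun _ : ℕ => om) ∧
      HEq q (GPath.cons (e5 m hm) (GPath.nil (m := m) (fun _ : ℕ => om)))) := by
  intro v w q
  induction q with
  | nil u =>
    intro hw hpre
    subst hw
    exact Or.inl ⟨rfl, rfl, HEq.rfl⟩
  | cons e q' ih =>
    intro hw hpre
    rename_i vv bb ww
    have hpb : Pre (m-1) bb := pre_step e hpre
    rcases ih hw hpb with ⟨hb, hw', hq'⟩ | ⟨hb, hw', hq'⟩
    · subst hb
      subst hw
      have hv := inOm hm e hpre
      subst hv
      have hq'' : q' = GPath.nil (m := m) (fun _ : ℕ => om) := eq_of_heq hq'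
      subst hq''
      exact Or.inr ⟨rfl, rfl, heq_of_eq rfl⟩
    · subst hb
      subst hw
      exact absurd hpre (fun h => inZ e h)


theorem stmt10 (m a : ℕ) :
    -- main case: `x` contains at least one zero
    (1 ≤ a → a ≤ m - 2 →
      ∃ (e : GE m (critW m a) (critW m (a + 1)))
        (p : GPath m (critW m a) (critW m (a + 1))),
        p ≠ GPath.cons e (GPath.nil _) ∧
        plen p = 2 * (m - a) - 1 ∧
        ∀ q : GPath m (critW m a) (critW m (a + 1)),
          q = GPath.cons e (GPath.nil _) ∨ q = p) ∧
    -- extremal case `t = -1`: `x = 1…1`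
    (a = m - 1 → 1 ≤ m →
      ∃ e : GE m (critW m a) (critW m m),
        ∀ q : GPath m (critW m a) (critW m m), q = GPath.cons e (GPath.nil _)) := by
  constructor
  · intro ha1 ham
    have h2 : a + 2 ≤ m := by omega
    rw [critW_eq_Aw m a (by omega), critW_eq_Ew m a h2]
    have hcv : CanonV m a (2*(m-a)-1) = Aw a (m-1) := by
      obtain ⟨t', ht'⟩ : ∃ t', 2*(m-a)-1 = t'+1 := ⟨2*(m-a)-2, by omega⟩
      rw [ht', cv_top m a t' (by omega)]
    have hty : GPath m (CanonV m a (2*(m-a)-1)) (Ew m a a) =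
        GPath m (Aw a (m-1)) (Ew m a a) := by rw [hcv]
    refine ⟨e0 m a h2, cast hty (cp m a h2 (2*(m-a)-1) (by omega)), ?_, ?_, ?_⟩
    · intro hc
      have hpl : plen (cast hty (cp m a h2 (2*(m-a)-1) (by omega))) = 2*(m-a)-1 := by
        rw [plen_heq hcv.symm (cast_heq hty (cp m a h2 (2*(m-a)-1) (by omega)))]
        exact plen_cp m a h2 _ _
      rw [hc] at hpl
      simp [plen] at hpl
      omega
    · rw [plen_heq hcv.symm (cast_heq hty (cp m a h2 (2*(m-a)-1) (by omega)))]
      exact plen_cp m a h2 _ _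
    · intro q
      rcases mainLem m a h2 _ _ q rfl (pre_Aw a (m-1)) with ⟨t, ht, hv, hq⟩ | ⟨-, -, hq⟩
      · right
        have htT : t = 2*(m-a)-1 := by
          by_contra hcne
          exact cv_ne_z m a t h2 (by omega) hv.symm
        subst htT
        exact eq_of_heq (hq.trans (cast_heq hty (cp m a h2 (2*(m-a)-1) (by omega))).symm)
      · left
        exact eq_of_heq hq
  · intro ha hm
    subst ha
    rw [critW_eq_Aw m (m-1) (by omega), critW_eq_om m]
    refine ⟨e5 m hm, ?_⟩
    intro q
    rcases mainX m hm _ _ q rfl (pre_Aw (m-1) (m-1)) with ⟨hv, -, -⟩ | ⟨-, -, hq⟩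
    · exfalso
      have hx := congrFun hv (m-1)
      unfold Aw at hx
      split_ifs at hx <;> simp_all
    · exact eq_of_heq hq


end Stmt10
end

section
/- The Morse complex of the 2-strand torus braid σ_1^m (m ≥ 0) is a complex over Mat(Cob(4)) with exactly one chain object in each homological degree t ∈ {−m, −m+1, …, 0}; the object in degree t is the crossingless 2-strand identity smoothing with internal grading shift {2t − m} for −m ≤ t ≤ −1 and {−m} for t = 0. In particular, the number of indecomposable summands of this representative of the homotopy class of ⟦σ_1^m⟧ equals m + 1. -/
/-!
STATEMENT 11 (combinatorial form): The Morse complex of the 2-strand torus braid `σ₁^m`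
has exactly one chain object in each homological degree `t ∈ {-m, …, 0}`: the critical
cells of the Morse matching are exactly the enhanced words `1…1 0^x…0^x 0` (with
`a < m` leading ones, of homological degree `t = a - m`) together with the all-ones word
(degree `0`); each object is the crossingless 2-strand identity smoothing, with internal
grading shift `2t - m + 1` for `-m ≤ t ≤ -1` (so `-3m + 1` in degree `-m`, …, `-m - 1` in
degree `-1`, as in the paper's Figure 4) and `-m` for `t = 0`. In particular the number of
indecomposable summands of this representative of the homotopy class of `⟦σ₁^m⟧` is
`m + 1`.
-/

namespace Stmt11

/-- The symbols: `zx = 0^x`, `z1 = 0^1`, `zm = 0^-`, `om = 1^-`. -/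
inductive Sym : Type
  | zx | z1 | zm | om
  deriving DecidableEq

open Sym

/-- Words are functions `ℕ → Sym`; a word of length `m` is padded with `om` beyond `m`. -/
abbrev Word : Type := ℕ → Sym

/-- A symbol is a zero-smoothing. -/
def isZ (s : Sym) : Prop := s ≠ om

/-- An enhanced word of the 2-strand braid `σ₁^m`: padded by `om` beyond `m`, and a `0`
carries superscript `x` or `1` iff it is not the last zero (the last zero carries `-`,
ones carry `-`). -/
def Valid (m : ℕ) (w : Word) : Prop :=
  (∀ i, m ≤ i → w i = om) ∧
  ∀ i < m, ((w i = zx ∨ w i = z1) ↔ (isZ (w i) ∧ ∃ j, i < j ∧ j < m ∧ isZ (w j)))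

/-- The nonzero matrix elements of the delooped Khovanov cube of `σ₁^m` between enhanced
words: `b` is obtained from `a` by changing one `0` (at index `q`) into a `1`; depending on
the position of `q` among the zeros of `a`, the corresponding dotted cobordism is nonzero
precisely in the following cases (merges of labelled circles following the Frobenius rules
`x·x = 0`, `x·1 = x`, `1·1 = 1`, merges of a labelled circle into the through-strands being
the identity or a dotted identity). -/
def KEdge (m : ℕ) (a b : Word) : Prop :=
  Valid m a ∧ Valid m b ∧ ∃ q, q < m ∧ isZ (a q) ∧ b q = om ∧
    ( -- `q` is the first zero (possibly the only one): a circle (if any) is merged into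
      -- the through-strands; all other labels are unchanged
      ((∀ i, i < q → a i = om) ∧ (∀ i, i ≠ q → b i = a i)) ∨
      -- `q` is the last zero, with a previous zero at `p`: the circle `(p, q)` is merged
      -- into the through-strands and `p` becomes the (unlabelled) last zero
      (∃ p, p < q ∧ isZ (a p) ∧ (∀ i, p < i → i < q → a i = om) ∧
        (∀ i, q < i → a i = om) ∧ b p = zm ∧
        (∀ i, i ≠ p → i ≠ q → b i = a i)) ∨
      -- `q` is a middle zero, with previous zero `p` and a later zero: the circles
      -- `(p, q)` and `(q, next)` merge, with labels multiplied (`x·x` gives the zero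
      -- morphism, hence no edge)
      (∃ p, p < q ∧ isZ (a p) ∧ (∀ i, p < i → i < q → a i = om) ∧
        (∃ j, q < j ∧ j < m ∧ isZ (a j)) ∧ ¬(a p = zx ∧ a q = zx) ∧
        ((a p = z1 ∧ a q = z1 ∧ b p = z1) ∨ (¬(a p = z1 ∧ a q = z1) ∧ b p = zx)) ∧
        (∀ i, i ≠ p → i ≠ q → b i = a i)))

/-- The matching pattern at position `p`:
`z = 1…1 0^x…0^x 0^1 0^s y…` is matched with `x = 1…1 0^x…0^x 0^s 1 y…`. -/
def Mpat (m : ℕ) (z x : Word) (p : ℕ) : Prop :=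
  p + 1 < m ∧
  (∃ t, t ≤ p ∧ (∀ i, i < t → z i = om) ∧ (∀ i, t ≤ i → i < p → z i = zx)) ∧
  z p = z1 ∧ isZ (z (p + 1)) ∧
  x p = z (p + 1) ∧ x (p + 1) = om ∧ (∀ i, i ≠ p → i ≠ p + 1 → x i = z i)

/-- The Morse matching `M` on the enhanced words of `σ₁^m`. -/
def MM (m : ℕ) (z x : Word) : Prop :=
  Valid m z ∧ Valid m x ∧ ∃ p, Mpat m z x p

/-- The edge relation of the graph `G(⟦σ₁^m⟧_Enh, M)`: nonzero matrix elements, with the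
arrows of `M` reversed. -/
def GE (m : ℕ) (a b : Word) : Prop := (KEdge m a b ∧ ¬ MM m a b) ∨ MM m b a

/-- A directed cycle. -/
def HasCycle {V : Type*} (E : V → V → Prop) : Prop :=
  ∃ (n : ℕ) (f : ℕ → V), 0 < n ∧ f n = f 0 ∧ ∀ t < n, E (f t) (f (t + 1))


/-- The critical cell with `a` leading ones. -/
def critW (m a : ℕ) : Word := fun i =>
  if i < a then om else if i + 1 < m then zx else if i + 1 = m then zm else om

/-- A critical (unmatched) cell of the Morse matching. -/
def Crit (m : ℕ) (w : Word) : Prop :=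
  Valid m w ∧ (∀ x, ¬ MM m w x) ∧ (∀ z, ¬ MM m z w)

/-- The homological degree of an enhanced word: (number of ones) − m. -/
def hdeg (m : ℕ) (w : Word) : ℤ :=
  (((Finset.range m).filter fun i => w i = om).card : ℤ) - m

/-- The internal grading shift of the (delooped) cell of an enhanced word:
(number of ones) + n₊ − 2·n₋ + #(labels `1`) − #(labels `x`), with `n₊ = 0`, `n₋ = m`. -/
def qsh (m : ℕ) (w : Word) : ℤ :=
  (((Finset.range m).filter fun i => w i = om).card : ℤ) - 2 * m
    + (((Finset.range m).filter fun i => w i = z1).card : ℤ)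
    - (((Finset.range m).filter fun i => w i = zx).card : ℤ)

/-! ### Auxiliary lemmas -/

section Aux

variable {m a b i p : ℕ} {w : Word}

lemma critW_lt (h : i < a) : critW m a i = om := by simp [critW, h]

lemma critW_mid (h1 : a ≤ i) (h2 : i + 1 < m) : critW m a i = zx := by
  unfold critW; rw [if_neg (by omega), if_pos h2]

lemma critW_last (h1 : a ≤ i) (h2 : i + 1 = m) : critW m a i = zm := by
  unfold critW; rw [if_neg (by omega), if_neg (by omega), if_pos h2]

lemma critW_ge (h1 : a ≤ i) (h2 : m ≤ i) : critW m a i = om := by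
  unfold critW; rw [if_neg (by omega), if_neg (by omega), if_neg (by omega)]

lemma critW_ne_z1 (m a i : ℕ) : critW m a i ≠ z1 := by
  unfold critW; split_ifs <;> exact fun h => Sym.noConfusion h

lemma valid_critW (ha : a ≤ m) : Valid m (critW m a) := by
  constructor
  · intro i hi
    unfold critW
    rw [if_neg (by omega), if_neg (by omega), if_neg (by omega)]
  · intro i hi
    rcases lt_or_ge i a with h | h
    · rw [critW_lt h]
      simp [isZ]
    · rcases (by omega : i + 1 < m ∨ i + 1 = m) with h2 | h2
      · rw [critW_mid h h2]
        constructor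
        · intro _
          refine ⟨by simp [isZ], i + 1, by omega, h2, ?_⟩
          rcases (by omega : i + 2 < m ∨ i + 2 = m) with h3 | h3
          · rw [critW_mid (by omega) h3]; simp [isZ]
          · rw [critW_last (by omega) h3]; simp [isZ]
        · intro _; left; rfl
      · rw [critW_last h h2]
        constructor
        · rintro (h3 | h3) <;> exact Sym.noConfusion h3
        · rintro ⟨-, j, hj1, hj2, -⟩; omega

/-- Replace `(z p, z (p+1)) = (z1, s)` by `(s, 1)`: the matched partner `x`. -/
def swapX (w : Word) (p : ℕ) : Word :=
  fun i => if i = p then w (p + 1) else if i = p + 1 then om else w i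

/-- Replace `(x p, x (p+1)) = (s, 1)` by `(z1, s)`: the matched partner `z`. -/
def swapZ (w : Word) (p : ℕ) : Word :=
  fun i => if i = p then z1 else if i = p + 1 then w p else w i

lemma swapX_p : swapX w p p = w (p + 1) := by simp [swapX]

lemma swapX_p1 : swapX w p (p + 1) = om := by
  unfold swapX; rw [if_neg (by omega), if_pos rfl]

lemma swapX_other (h1 : i ≠ p) (h2 : i ≠ p + 1) : swapX w p i = w i := by
  simp [swapX, h1, h2]

lemma swapZ_p : swapZ w p p = z1 := by simp [swapZ]

lemma swapZ_p1 : swapZ w p (p + 1) = w p := by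
  unfold swapZ; rw [if_neg (by omega), if_pos rfl]

lemma swapZ_other (h1 : i ≠ p) (h2 : i ≠ p + 1) : swapZ w p i = w i := by
  simp [swapZ, h1, h2]

lemma valid_swapX (hw : Valid m w) (hp : p + 1 < m) (h1 : isZ (w (p + 1))) :
    Valid m (swapX w p) := by
  obtain ⟨hpad, hlab⟩ := hw
  constructor
  · intro i hi
    rw [swapX_other (by omega) (by omega)]
    exact hpad i hi
  · intro i hi
    by_cases hip : i = p
    · subst hip
      rw [swapX_p, hlab (i + 1) hp]
      constructor
      · rintro ⟨hz, j, hj1, hj2, hj3⟩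
        refine ⟨hz, j, by omega, hj2, ?_⟩
        rwa [swapX_other (by omega) (by omega)]
      · rintro ⟨hz, j, hj1, hj2, hj3⟩
        by_cases hj : j = i + 1
        · subst hj; rw [swapX_p1] at hj3; exact absurd rfl hj3
        · rw [swapX_other (by omega) hj] at hj3
          exact ⟨hz, j, by omega, hj2, hj3⟩
    · by_cases hip1 : i = p + 1
      · subst hip1
        rw [swapX_p1]
        simp [isZ]
      · rw [swapX_other hip hip1, hlab i hi]
        rcases lt_or_ge i p with hlt | hgt
        · constructor
          · rintro ⟨hz, -⟩
            refine ⟨hz, p, hlt, by omega, ?_⟩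
            rw [swapX_p]; exact h1
          · rintro ⟨hz, -⟩
            exact ⟨hz, p + 1, by omega, hp, h1⟩
        · have hi2 : p + 1 < i := by omega
          constructor
          · rintro ⟨hz, j, hj1, hj2, hj3⟩
            refine ⟨hz, j, hj1, hj2, ?_⟩
            rwa [swapX_other (by omega) (by omega)]
          · rintro ⟨hz, j, hj1, hj2, hj3⟩
            rw [swapX_other (by omega) (by omega)] at hj3
            exact ⟨hz, j, hj1, hj2, hj3⟩

lemma valid_swapZ (hw : Valid m w) (hp : p + 1 < m) (h0 : isZ (w p))
    (h1 : w (p + 1) = om) : Valid m (swapZ w p) := by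
  obtain ⟨hpad, hlab⟩ := hw
  constructor
  · intro i hi
    rw [swapZ_other (by omega) (by omega)]
    exact hpad i hi
  · intro i hi
    by_cases hip : i = p
    · subst hip
      rw [swapZ_p]
      refine iff_of_true (Or.inr rfl) ⟨fun h => Sym.noConfusion h, i + 1, by omega, hp, ?_⟩
      rw [swapZ_p1]; exact h0
    · by_cases hip1 : i = p + 1
      · subst hip1
        rw [swapZ_p1, hlab p (by omega)]
        constructor
        · rintro ⟨hz, j, hj1, hj2, hj3⟩
          have hj : j ≠ p + 1 := by
            intro h; rw [h, h1] at hj3; exact hj3 rfl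
          refine ⟨hz, j, by omega, hj2, ?_⟩
          rwa [swapZ_other (by omega) hj]
        · rintro ⟨hz, j, hj1, hj2, hj3⟩
          rw [swapZ_other (by omega) (by omega)] at hj3
          exact ⟨hz, j, by omega, hj2, hj3⟩
      · rw [swapZ_other hip hip1, hlab i hi]
        rcases lt_or_ge i p with hlt | hgt
        · constructor
          · rintro ⟨hz, -⟩
            refine ⟨hz, p, hlt, by omega, ?_⟩
            rw [swapZ_p]; exact fun h => Sym.noConfusion h
          · rintro ⟨hz, -⟩
            exact ⟨hz, p, hlt, by omega, h0⟩
        · have hi2 : p + 1 < i := by omega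
          constructor
          · rintro ⟨hz, j, hj1, hj2, hj3⟩
            refine ⟨hz, j, hj1, hj2, ?_⟩
            rwa [swapZ_other (by omega) (by omega)]
          · rintro ⟨hz, j, hj1, hj2, hj3⟩
            rw [swapZ_other (by omega) (by omega)] at hj3
            exact ⟨hz, j, hj1, hj2, hj3⟩

end Aux
section CritChar

variable {m a : ℕ} {w : Word}

lemma crit_critW (ha : a ≤ m) : Crit m (critW m a) := by
  refine ⟨valid_critW ha, ?_, ?_⟩
  · rintro x ⟨-, -, p, hpm, -, hz1, -⟩
    exact critW_ne_z1 m a p hz1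
  · rintro z ⟨-, -, p, hpm, -, -, hzz, hxp, hxp1, -⟩
    have hpa : p + 1 < a := by
      by_contra h
      rcases (by omega : p + 2 < m ∨ p + 2 = m) with h2 | h2
      · rw [critW_mid (by omega) h2] at hxp1; exact Sym.noConfusion hxp1
      · rw [critW_last (by omega) h2] at hxp1; exact Sym.noConfusion hxp1
    rw [critW_lt (by omega)] at hxp
    exact hzz hxp.symm

lemma crit_to (hc : Crit m w) : ∃ a, a ≤ m ∧ w = critW m a := by
  obtain ⟨⟨hpad, hlab⟩, hs, ht⟩ := hc
  by_cases hex : ∃ i, i < m ∧ w i ≠ om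
  · obtain ⟨ham, haz⟩ := Nat.find_spec hex
    set a := Nat.find hex with ha
    have hfirst : ∀ i, i < a → w i = om := by
      intro i hi
      by_contra h
      exact Nat.find_min hex hi ⟨by omega, h⟩
    -- all positions in [a, m) are zeros
    have hallz : ∀ i, a ≤ i → i < m → isZ (w i) := by
      by_contra h
      push_neg at h
      obtain ⟨q0, hq01, hq02, hq03⟩ := h
      have hq03' : w q0 = om := not_not.mp hq03
      have hexq : ∃ i, a < i ∧ i < m ∧ w i = om := by
        refine ⟨q0, ?_, hq02, hq03'⟩
        rcases Nat.lt_or_ge a q0 with h' | h'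
        · exact h'
        · exfalso
          have he : q0 = a := by omega
          rw [he] at hq03'
          exact haz hq03'
      obtain ⟨hqa, hqm, hqom⟩ := Nat.find_spec hexq
      set q := Nat.find hexq with hq
      have hzq : ∀ i, a ≤ i → i < q → isZ (w i) := by
        intro i h1 h2
        rcases Nat.eq_or_lt_of_le h1 with h3 | h3
        · rw [← h3]; exact haz
        · intro h4
          exact Nat.find_min hexq h2 ⟨h3, by omega, h4⟩
      by_cases hz1 : ∃ i, a ≤ i ∧ i + 1 < q ∧ w i = z1
      · -- matched as source at the first such z1
        obtain ⟨hp1, hp2, hp3⟩ := Nat.find_spec hz1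
        set p := Nat.find hz1 with hpd
        have hzx : ∀ i, a ≤ i → i < p → w i = zx := by
          intro i h1 h2
          have hne : w i ≠ z1 := by
            intro h3
            exact Nat.find_min hz1 h2 ⟨h1, by omega, h3⟩
          have := (hlab i (by omega)).2 ⟨hzq i h1 (by omega), i + 1, by omega, by omega,
            hzq (i + 1) (by omega) (by omega)⟩
          rcases this with h' | h'
          · exact h'
          · exact absurd h' hne
        refine absurd ?_ (hs (swapX w p))
        refine ⟨⟨hpad, hlab⟩, valid_swapX ⟨hpad, hlab⟩ (by omega)
          (hzq (p + 1) (by omega) (by omega)), p, by omega,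
          ⟨a, hp1, hfirst, hzx⟩, hp3, hzq (p + 1) (by omega) (by omega),
          swapX_p, swapX_p1, fun i h1 h2 => swapX_other h1 h2⟩
      · -- matched as target at p = q - 1
        push_neg at hz1
        have hq1 : a ≤ q - 1 := by omega
        have hqe : q - 1 + 1 = q := by omega
        have hz : isZ (w (q - 1)) := hzq (q - 1) hq1 (by omega)
        have hzx : ∀ i, a ≤ i → i < q - 1 → w i = zx := by
          intro i h1 h2
          have hne : w i ≠ z1 := hz1 i h1 (by omega)
          have := (hlab i (by omega)).2 ⟨hzq i h1 (by omega), i + 1, by omega, by omega,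
            hzq (i + 1) (by omega) (by omega)⟩
          rcases this with h' | h'
          · exact h'
          · exact absurd h' hne
        refine absurd ?_ (ht (swapZ w (q - 1)))
        refine ⟨valid_swapZ ⟨hpad, hlab⟩ (by omega) hz (by rw [hqe]; exact hqom),
          ⟨hpad, hlab⟩, q - 1, by omega, ⟨a, hq1, ?_, ?_⟩, swapZ_p, ?_, ?_, ?_, ?_⟩
        · intro i hi
          rw [swapZ_other (by omega) (by omega)]
          exact hfirst i hi
        · intro i h1 h2
          rw [swapZ_other (by omega) (by omega)]
          exact hzx i h1 h2
        · rw [swapZ_p1]; exact hz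
        · rw [swapZ_p1]
        · rw [hqe]; exact hqom
        · intro i h1 h2
          rw [swapZ_other h1 h2]
    -- no z1 at all in [a, m-1)
    by_cases hz1 : ∃ i, a ≤ i ∧ i + 1 < m ∧ w i = z1
    · obtain ⟨hp1, hp2, hp3⟩ := Nat.find_spec hz1
      set p := Nat.find hz1 with hpd
      have hzx : ∀ i, a ≤ i → i < p → w i = zx := by
        intro i h1 h2
        have hne : w i ≠ z1 := by
          intro h3
          exact Nat.find_min hz1 h2 ⟨h1, by omega, h3⟩
        have := (hlab i (by omega)).2 ⟨hallz i h1 (by omega), i + 1, by omega, by omega,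
          hallz (i + 1) (by omega) (by omega)⟩
        rcases this with h' | h'
        · exact h'
        · exact absurd h' hne
      refine absurd ?_ (hs (swapX w p))
      refine ⟨⟨hpad, hlab⟩, valid_swapX ⟨hpad, hlab⟩ (by omega)
        (hallz (p + 1) (by omega) hp2), p, hp2,
        ⟨a, hp1, hfirst, hzx⟩, hp3, hallz (p + 1) (by omega) hp2,
        swapX_p, swapX_p1, fun i h1 h2 => swapX_other h1 h2⟩
    · push_neg at hz1
      refine ⟨a, by omega, funext fun i => ?_⟩
      rcases Nat.lt_or_ge i m with him | him
      · rcases Nat.lt_or_ge i a with hia | hia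
        · rw [critW_lt hia]; exact hfirst i hia
        · rcases (by omega : i + 1 < m ∨ i + 1 = m) with h2 | h2
          · rw [critW_mid hia h2]
            have hne : w i ≠ z1 := hz1 i hia h2
            have := (hlab i him).2 ⟨hallz i hia him, i + 1, by omega, h2,
              hallz (i + 1) (by omega) h2⟩
            rcases this with h' | h'
            · exact h'
            · exact absurd h' hne
          · rw [critW_last hia h2]
            have hnz : ¬(w i = zx ∨ w i = z1) := by
              rw [hlab i him]
              rintro ⟨-, j, hj1, hj2, -⟩; omega
            have hz : isZ (w i) := hallz i hia him
            cases h : w i with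
            | zx => exact absurd (Or.inl h) hnz
            | z1 => exact absurd (Or.inr h) hnz
            | zm => rfl
            | om => exact absurd h hz
      · rw [critW_ge (by omega) him]
        exact hpad i him
  · push_neg at hex
    refine ⟨m, le_rfl, funext fun i => ?_⟩
    rcases Nat.lt_or_ge i m with him | him
    · rw [critW_lt him]; exact hex i him
    · rw [critW_ge him him]; exact hpad i him

lemma crit_iff : Crit m w ↔ ∃ a, a ≤ m ∧ w = critW m a :=
  ⟨crit_to, fun ⟨_, ha, hw⟩ => hw ▸ crit_critW ha⟩

end CritChar
section Count

variable {m a b : ℕ}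

lemma filter_om (ha : a ≤ m) :
    ((Finset.range m).filter fun i => critW m a i = om) = Finset.range a := by
  ext i
  simp only [Finset.mem_filter, Finset.mem_range]
  constructor
  · rintro ⟨him, heq⟩
    by_contra h
    push_neg at h
    rcases (by omega : i + 1 < m ∨ i + 1 = m) with h2 | h2
    · rw [critW_mid h h2] at heq; exact Sym.noConfusion heq
    · rw [critW_last h h2] at heq; exact Sym.noConfusion heq
  · intro hia
    exact ⟨by omega, critW_lt hia⟩

lemma filter_z1 :
    ((Finset.range m).filter fun i => critW m a i = z1) = ∅ := by
  apply Finset.filter_eq_empty_iff.mpr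
  intro i _
  exact critW_ne_z1 m a i

lemma filter_zx (ha : a ≤ m) :
    ((Finset.range m).filter fun i => critW m a i = zx) = Finset.Ico a (m - 1) := by
  ext i
  simp only [Finset.mem_filter, Finset.mem_range, Finset.mem_Ico]
  constructor
  · rintro ⟨him, heq⟩
    rcases Nat.lt_or_ge i a with h | h
    · rw [critW_lt h] at heq; exact absurd heq (fun h' => Sym.noConfusion h')
    · rcases (by omega : i + 1 < m ∨ i + 1 = m) with h2 | h2
      · exact ⟨h, by omega⟩
      · rw [critW_last h h2] at heq; exact absurd heq (fun h' => Sym.noConfusion h')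
  · rintro ⟨h1, h2⟩
    exact ⟨by omega, critW_mid h1 (by omega)⟩

lemma hdeg_critW (ha : a ≤ m) : hdeg m (critW m a) = (a : ℤ) - m := by
  unfold hdeg
  rw [filter_om ha, Finset.card_range]

lemma qsh_critW (ha : a ≤ m) :
    qsh m (critW m a) = (a : ℤ) - 2 * m - ((m - 1 - a : ℕ) : ℤ) := by
  unfold qsh
  rw [filter_om ha, filter_z1, filter_zx ha, Finset.card_range, Finset.card_empty,
    Nat.card_Ico]
  omega

lemma critW_injOn (ha : a ≤ m) (hb : b ≤ m) (h : critW m a = critW m b) : a = b := by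
  rcases Nat.lt_trichotomy a b with hab | hab | hab
  · have h1 := congrFun h a
    rw [critW_lt hab] at h1
    rcases (by omega : a + 1 < m ∨ a + 1 = m) with h2 | h2
    · rw [critW_mid le_rfl h2] at h1; exact Sym.noConfusion h1
    · rw [critW_last le_rfl h2] at h1; exact Sym.noConfusion h1
  · exact hab
  · have h1 := congrFun h b
    rw [critW_lt hab] at h1
    rcases (by omega : b + 1 < m ∨ b + 1 = m) with h2 | h2
    · rw [critW_mid le_rfl h2] at h1; exact Sym.noConfusion h1.symm
    · rw [critW_last le_rfl h2] at h1; exact Sym.noConfusion h1.symm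

end Count

theorem stmt11 (m : ℕ) :
    -- the critical cells are exactly the words `critW m a`, `a ≤ m`
    (∀ w, Crit m w ↔ ∃ a, a ≤ m ∧ w = critW m a) ∧
    -- exactly one chain object in each homological degree `t ∈ {-m, …, 0}`
    (∀ t : ℤ, -(m : ℤ) ≤ t → t ≤ 0 → ∃! w, Crit m w ∧ hdeg m w = t) ∧
    -- internal grading shifts: `2t - m + 1` in degrees `t ≤ -1`, and `-m` in degree `0`
    (∀ a : ℕ, a < m → qsh m (critW m a) = 2 * ((a : ℤ) - m) - m + 1) ∧
    (qsh m (critW m m) = -(m : ℤ)) ∧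
    -- the number of indecomposable summands is `m + 1`
    Nat.card {w : Word // Crit m w} = m + 1 := by
  refine ⟨fun w => crit_iff, ?_, ?_, ?_, ?_⟩
  · intro t h1 h2
    have ha : ((t + m).toNat : ℤ) = t + m := Int.toNat_of_nonneg (by omega)
    have ham : (t + m).toNat ≤ m := by omega
    refine ⟨critW m (t + m).toNat, ⟨crit_critW ham, by rw [hdeg_critW ham]; omega⟩, ?_⟩
    rintro w ⟨hc, hd⟩
    obtain ⟨b, hb, rfl⟩ := crit_to hc
    rw [hdeg_critW hb] at hd
    have : b = (t + m).toNat := by omega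
    rw [this]
  · intro a ha
    rw [qsh_critW (le_of_lt ha)]
    omega
  · rw [qsh_critW le_rfl]
    omega
  · have hbij : Function.Bijective
        (fun a : Fin (m + 1) => (⟨critW m a, crit_critW (by omega)⟩ : {w : Word // Crit m w})) := by
      constructor
      · intro a b hab
        have := congrArg Subtype.val hab
        exact Fin.ext (critW_injOn (by omega) (by omega) this)
      · rintro ⟨w, hw⟩
        obtain ⟨a, ha, rfl⟩ := crit_to hw
        exact ⟨⟨a, by omega⟩, rfl⟩
    rw [← Nat.card_eq_of_bijective _ hbij, Nat.card_eq_fintype_card, Fintype.card_fin]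

end Stmt11
end

section
/- Stable periodicity of 2-torus braid complexes (head): For every m ≥ 0 and every t ≥ −m there are isomorphisms of truncated complexes τ^{≥ −m} M⟦σ_1^m⟧_Enh ≅ τ^{≥ −m}(M⟦σ_1^{m+2}⟧_Enh {2}), i.e. for all t ≥ −m there exist isomorphisms ψ_t between the degree-t chain spaces of M⟦σ_1^m⟧_Enh and of M⟦σ_1^{m+2}⟧_Enh{2} commuting with the differentials. -/
/-!
STATEMENT 12: Stable periodicity of 2-torus braid complexes (head):
`τ^{≥ -m} M⟦σ₁^m⟧_Enh ≅ τ^{≥ -m} (M⟦σ₁^{m+2}⟧_Enh {2})`.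

The Morse complexes are presented combinatorially: the chain space of `M⟦σ₁^m⟧_Enh` in
homological degree `t = a - m` is the cell of the unique critical enhanced word
`critW m a`, and the differential is the signed sum over directed paths of the graph
`G(⟦σ₁^m⟧_Enh, M)` (discrete Morse theory). The cells and matrix elements of the delooped
Khovanov complexes are abstract data `cell`, `dv`, `gv` over an additive category,
constrained by the structural hypotheses of the Bar-Natan cube: matrix elements are
supported on the combinatorial edge relation `KEdge`, matched arrows are isomorphisms
(with inverses `gv`), and — since glueing `σ₁^{m+2}` is obtained from `σ₁^m` by stacking a
full twist, i.e. prepending two `1`-smoothed crossings — cells and matrix elements are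
invariant under prepending `11` to enhanced words. Conclusion: for every homological
degree `t ≥ -m` (i.e. every `a = m + t ∈ {0, …, m}`) there are isomorphisms `ψ` of the
Morse chain spaces commuting with the Morse differentials; the internal grading shifts
differ by exactly `2` (the `{2}`).
-/

namespace Stmt12

/-- The symbols: `zx = 0^x`, `z1 = 0^1`, `zm = 0^-`, `om = 1^-`. -/
inductive Sym : Type
  | zx | z1 | zm | om
  deriving DecidableEq

open Sym

/-- Words are functions `ℕ → Sym`; a word of length `m` is padded with `om` beyond `m`. -/
abbrev Word : Type := ℕ → Sym

/-- A symbol is a zero-smoothing. -/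
def isZ (s : Sym) : Prop := s ≠ om

/-- An enhanced word of the 2-strand braid `σ₁^m`: padded by `om` beyond `m`, and a `0`
carries superscript `x` or `1` iff it is not the last zero (the last zero carries `-`,
ones carry `-`). -/
def Valid (m : ℕ) (w : Word) : Prop :=
  (∀ i, m ≤ i → w i = om) ∧
  ∀ i < m, ((w i = zx ∨ w i = z1) ↔ (isZ (w i) ∧ ∃ j, i < j ∧ j < m ∧ isZ (w j)))

/-- The nonzero matrix elements of the delooped Khovanov cube of `σ₁^m` between enhanced
words: `b` is obtained from `a` by changing one `0` (at index `q`) into a `1`; depending on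
the position of `q` among the zeros of `a`, the corresponding dotted cobordism is nonzero
precisely in the following cases (merges of labelled circles following the Frobenius rules
`x·x = 0`, `x·1 = x`, `1·1 = 1`, merges of a labelled circle into the through-strands being
the identity or a dotted identity). -/
def KEdge (m : ℕ) (a b : Word) : Prop :=
  Valid m a ∧ Valid m b ∧ ∃ q, q < m ∧ isZ (a q) ∧ b q = om ∧
    ( -- `q` is the first zero (possibly the only one): a circle (if any) is merged into
      -- the through-strands; all other labels are unchanged
      ((∀ i, i < q → a i = om) ∧ (∀ i, i ≠ q → b i = a i)) ∨
      -- `q` is the last zero, with a previous zero at `p`: the circle `(p, q)` is merged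
      -- into the through-strands and `p` becomes the (unlabelled) last zero
      (∃ p, p < q ∧ isZ (a p) ∧ (∀ i, p < i → i < q → a i = om) ∧
        (∀ i, q < i → a i = om) ∧ b p = zm ∧
        (∀ i, i ≠ p → i ≠ q → b i = a i)) ∨
      -- `q` is a middle zero, with previous zero `p` and a later zero: the circles
      -- `(p, q)` and `(q, next)` merge, with labels multiplied (`x·x` gives the zero
      -- morphism, hence no edge)
      (∃ p, p < q ∧ isZ (a p) ∧ (∀ i, p < i → i < q → a i = om) ∧
        (∃ j, q < j ∧ j < m ∧ isZ (a j)) ∧ ¬(a p = zx ∧ a q = zx) ∧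
        ((a p = z1 ∧ a q = z1 ∧ b p = z1) ∨ (¬(a p = z1 ∧ a q = z1) ∧ b p = zx)) ∧
        (∀ i, i ≠ p → i ≠ q → b i = a i)))

/-- The matching pattern at position `p`:
`z = 1…1 0^x…0^x 0^1 0^s y…` is matched with `x = 1…1 0^x…0^x 0^s 1 y…`. -/
def Mpat (m : ℕ) (z x : Word) (p : ℕ) : Prop :=
  p + 1 < m ∧
  (∃ t, t ≤ p ∧ (∀ i, i < t → z i = om) ∧ (∀ i, t ≤ i → i < p → z i = zx)) ∧
  z p = z1 ∧ isZ (z (p + 1)) ∧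
  x p = z (p + 1) ∧ x (p + 1) = om ∧ (∀ i, i ≠ p → i ≠ p + 1 → x i = z i)

/-- The Morse matching `M` on the enhanced words of `σ₁^m`. -/
def MM (m : ℕ) (z x : Word) : Prop :=
  Valid m z ∧ Valid m x ∧ ∃ p, Mpat m z x p

/-- The edge relation of the graph `G(⟦σ₁^m⟧_Enh, M)`: nonzero matrix elements, with the
arrows of `M` reversed. -/
def GE (m : ℕ) (a b : Word) : Prop := (KEdge m a b ∧ ¬ MM m a b) ∨ MM m b a

/-- A directed cycle. -/
def HasCycle {V : Type*} (E : V → V → Prop) : Prop :=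
  ∃ (n : ℕ) (f : ℕ → V), 0 < n ∧ f n = f 0 ∧ ∀ t < n, E (f t) (f (t + 1))


/-- The critical cell with `a` leading ones. -/
def critW (m a : ℕ) : Word := fun i =>
  if i < a then om else if i + 1 < m then zx else if i + 1 = m then zm else om

/-- The internal grading shift of the (delooped) cell of an enhanced word. -/
def qsh (m : ℕ) (w : Word) : ℤ :=
  (((Finset.range m).filter fun i => w i = om).card : ℤ) - 2 * m
    + (((Finset.range m).filter fun i => w i = z1).card : ℤ)
    - (((Finset.range m).filter fun i => w i = zx).card : ℤ)

/-- Directed paths in `G(⟦σ₁^m⟧_Enh, M)`, with up-steps (unmatched nonzero matrix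
elements) and down-steps (reversed matched arrows) recorded. -/
inductive GPath (m : ℕ) : Word → Word → Type
  | nil (a : Word) : GPath m a a
  | up {a b c : Word} (e : KEdge m a b) (hne : ¬ MM m a b) (p : GPath m b c) : GPath m a c
  | down {a b c : Word} (e : MM m b a) (p : GPath m b c) : GPath m a c

/-- The number of reversed (matched) edges in a path. -/
def downs {m : ℕ} : ∀ {a b : Word}, GPath m a b → ℕ
  | _, _, .nil _ => 0
  | _, _, .up _ _ p => downs p
  | _, _, .down _ p => downs p + 1

section Cat

open CategoryTheory

universe v u

variable {𝒞 : Type u} [Category.{v} 𝒞] [Preadditive 𝒞]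

/-- The value of the remembering functor on a path, given the values `dv` of the matrix
elements on cells and the inverses `gv` of the matched arrows. -/
def pathHom (cell : Word → 𝒞) (dv : ∀ a b : Word, (cell a ⟶ cell b))
    (gv : ∀ a b : Word, (cell b ⟶ cell a)) (m : ℕ) :
    ∀ {a b : Word}, GPath m a b → (cell a ⟶ cell b)
  | _, _, .nil a => 𝟙 (cell a)
  | _, _, .up (a := a) (b := b) _ _ p => dv a b ≫ pathHom cell dv gv m p
  | _, _, .down (a := a) (b := b) _ p => gv b a ≫ pathHom cell dv gv m p

/-- A matrix element of the Morse differential: the signed sum over all directed paths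
between two (critical) cells. -/
noncomputable def mEntry (cell : Word → 𝒞) (dv : ∀ a b : Word, (cell a ⟶ cell b))
    (gv : ∀ a b : Word, (cell b ⟶ cell a)) (m : ℕ) (z x : Word) : (cell z ⟶ cell x) :=
  ∑ᶠ p : GPath m z x, ((-1 : ℤ) ^ downs p) • pathHom cell dv gv m p

end Cat


/-- Prepending two `1`-smoothed crossings (a full twist) to an enhanced word. -/
def prep2 (w : Word) : Word := fun i => if i < 2 then om else w (i - 2)

/-!
Prepending the full twist identifies the enhanced words of `σ₁^m` with the enhanced words of
`σ₁^{m+2}` that start with two `1`s, and this identification preserves and reflects validity,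
the nonzero matrix elements and the Morse matching. Neither edges nor reversed matched arrows
can turn a leading `1` into a `0`, so every directed path of `G(⟦σ₁^{m+2}⟧_Enh, M)` that
starts at a prepended word stays among prepended words. Hence `prep2` induces a bijection of
directed paths preserving the number of reversed arrows and, by the invariance of the matrix
elements (and of their inverses, by uniqueness of inverses), the value of each path. Since
`critW (m + 2) (a + 2) = prep2 (critW m a)`, the Morse differentials agree entry by entry.
-/

@[simp] lemma prep2_zero (w : Word) : prep2 w 0 = om := rfl

@[simp] lemma prep2_one (w : Word) : prep2 w 1 = om := rfl

@[simp] lemma prep2_add_two (w : Word) (i : ℕ) : prep2 w (i + 2) = w i := rfl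

lemma prep2_injective : Function.Injective prep2 :=
  fun _ _ h => funext fun i => congrFun h (i + 2)

lemma mem_range_prep2_of_eq_om {w : Word} (h0 : w 0 = om) (h1 : w 1 = om) : w ∈ Set.range prep2 :=
  ⟨fun i => w (i + 2), funext fun | 0 => h0.symm | 1 => h1.symm | _ + 2 => rfl⟩

-- The side conditions are bundled into one conjunction so that `simp` can discharge them.
lemma forall_add_two_iff {P : ℕ → Prop} (h : P 0 ∧ P 1) : (∀ i, P i) ↔ ∀ i, P (i + 2) :=
  ⟨fun h i => h (i + 2), fun h' => fun | 0 => h.1 | 1 => h.2 | i + 2 => h' i⟩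

lemma exists_add_two_iff {P : ℕ → Prop} (h : ¬P 0 ∧ ¬P 1) : (∃ i, P i) ↔ ∃ i, P (i + 2) :=
  ⟨fun | ⟨0, h0⟩ => (h.1 h0).elim | ⟨1, h1⟩ => (h.2 h1).elim | ⟨i + 2, h⟩ => ⟨i, h⟩,
   fun ⟨i, h⟩ => ⟨i + 2, h⟩⟩

lemma valid_prep2_iff {m : ℕ} {w : Word} : Valid (m + 2) (prep2 w) ↔ Valid m w := by
  simp [Valid, isZ, forall_add_two_iff, exists_add_two_iff]

lemma kEdge_prep2_iff {m : ℕ} {a b : Word} :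
    KEdge (m + 2) (prep2 a) (prep2 b) ↔ KEdge m a b := by
  simp [KEdge, valid_prep2_iff, isZ, forall_add_two_iff, exists_add_two_iff]

lemma exists_prefix_prep2_iff {w : Word} {p : ℕ} :
    (∃ t ≤ p + 2, (∀ i < t, prep2 w i = om) ∧ ∀ i, t ≤ i → i < p + 2 → prep2 w i = zx) ↔
      ∃ t ≤ p, (∀ i < t, w i = om) ∧ ∀ i, t ≤ i → i < p → w i = zx := by
  constructor
  · rintro ⟨t, htp, hom, hzx⟩
    obtain ⟨t, rfl⟩ : ∃ s, t = s + 2 := by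
      refine ⟨t - 2, by_contra fun ht => ?_⟩
      simpa using hzx 1 (by omega) (by omega)
    exact ⟨t, by omega, fun i hi => hom (i + 2) (by omega),
      fun i h1 h2 => hzx (i + 2) (by omega) (by omega)⟩
  · rintro ⟨t, htp, hom, hzx⟩
    refine ⟨t + 2, by omega, by simpa [forall_add_two_iff] using hom, fun i h1 h2 => ?_⟩
    obtain ⟨i, rfl⟩ : ∃ j, i = j + 2 := ⟨i - 2, by omega⟩
    exact hzx i (by omega) (by omega)

lemma mpat_prep2_iff {m p : ℕ} {z x : Word} :
    Mpat (m + 2) (prep2 z) (prep2 x) (p + 2) ↔ Mpat m z x p := by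
  rw [Mpat, Mpat, exists_prefix_prep2_iff, show p + 2 + 1 < m + 2 ↔ p + 1 < m by omega]
  simp [isZ, forall_add_two_iff]

lemma mm_prep2_iff {m : ℕ} {z x : Word} : MM (m + 2) (prep2 z) (prep2 x) ↔ MM m z x := by
  rw [MM, MM, valid_prep2_iff, valid_prep2_iff, exists_add_two_iff (by simp [Mpat])]
  simp only [mpat_prep2_iff]

lemma MM.kEdge {n : ℕ} {z x : Word} (h : MM n z x) : KEdge n z x := by
  obtain ⟨hvz, hvx, p, hpn, -, hzp, hzp1, hxp, hxp1, hrest⟩ := h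
  refine ⟨hvz, hvx, p + 1, hpn, hzp1, hxp1, Or.inr ?_⟩
  have hlabel := hvz.2 (p + 1) hpn
  by_cases hlater : ∃ j, p + 1 < j ∧ j < n ∧ isZ (z j)
  · refine Or.inr ⟨p, by omega, by simp [hzp, isZ], fun i _ _ => by omega, hlater, by simp [hzp],
      ?_, hrest⟩
    rcases hlabel.mpr ⟨hzp1, hlater⟩ with h | h <;> simp [hzp, hxp, h]
  · refine Or.inl ⟨p, by omega, by simp [hzp, isZ], fun i _ _ => by omega,
      fun i hi => ?_, ?_, hrest⟩
    · by_contra hne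
      exact hlater ⟨i, hi, by_contra fun hin => hne (hvz.1 i (by omega)), hne⟩
    · rw [hxp]
      cases hc : z (p + 1) <;> simp_all [isZ]

lemma KEdge.apply_eq_of_eq_om {n : ℕ} {a b : Word} (h : KEdge n a b) {i : ℕ} (hi : a i = om) :
    b i = a i := by
  obtain ⟨-, -, q, -, hq, -, ⟨-, hrest⟩ | ⟨p, -, hp, -, -, -, hrest⟩ |
    ⟨p, -, hp, -, -, -, -, hrest⟩⟩ := h
  · exact hrest i (by rintro rfl; exact hq hi)
  all_goals exact hrest i (by rintro rfl; exact hp hi) (by rintro rfl; exact hq hi)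

lemma KEdge.mem_range_prep2 {n : ℕ} {a b : Word} (h : KEdge n (prep2 a) b) :
    b ∈ Set.range prep2 :=
  mem_range_prep2_of_eq_om (h.apply_eq_of_eq_om rfl) (h.apply_eq_of_eq_om rfl)

lemma MM.mem_range_prep2 {n : ℕ} {z x : Word} (h : MM n z (prep2 x)) : z ∈ Set.range prep2 := by
  obtain ⟨-, -, p, -, -, -, hzp1, hxp, -, hrest⟩ := h
  have hp0 : p ≠ 0 := by rintro rfl; exact hzp1 hxp.symm
  have hp1 : p ≠ 1 := by rintro rfl; exact hzp1 hxp.symm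
  exact mem_range_prep2_of_eq_om (hrest 0 hp0.symm (by omega)).symm (hrest 1 hp1.symm (by omega)).symm

namespace GPath

variable {m : ℕ}

def lift : ∀ {a b : Word}, GPath m a b → GPath (m + 2) (prep2 a) (prep2 b)
  | _, _, .nil a => .nil (prep2 a)
  | _, _, .up e hne p => .up (kEdge_prep2_iff.mpr e) (mt mm_prep2_iff.mp hne) p.lift
  | _, _, .down e p => .down (mm_prep2_iff.mpr e) p.lift

lemma downs_lift {a b : Word} (p : GPath m a b) : downs p.lift = downs p := by
  induction p <;> simp only [lift, downs, *]

lemma lift_injective {a b : Word} : Function.Injective (lift : GPath m a b → _) := by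
  intro p
  induction p with
  | nil a => intro p' h; cases p' <;> first | rfl | cases h
  | up e hne p ih =>
    intro p' h
    cases p' with
    | nil => cases h
    | up e' hne' p' =>
      obtain ⟨hb, hp⟩ := GPath.up.inj h
      obtain rfl := prep2_injective hb
      rw [ih (eq_of_heq hp)]
    | down => cases h
  | down e p ih =>
    intro p' h
    cases p' with
    | nil => cases h
    | up => cases h
    | down e' p' =>
      obtain ⟨hb, hp⟩ := GPath.down.inj h
      obtain rfl := prep2_injective hb
      rw [ih (eq_of_heq hp)]

lemma exists_lift_heq {A C : Word} (q : GPath (m + 2) A C) :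
    ∀ a c, A = prep2 a → C = prep2 c → ∃ p : GPath m a c, p.lift ≍ q := by
  induction q with
  | nil A =>
    rintro a c rfl hc
    obtain rfl := prep2_injective hc
    exact ⟨.nil a, .rfl⟩
  | up e hne q ih =>
    rintro a c rfl rfl
    obtain ⟨b, rfl⟩ := e.mem_range_prep2
    obtain ⟨p, hp⟩ := ih b c rfl rfl
    obtain rfl := eq_of_heq hp
    exact ⟨.up (kEdge_prep2_iff.mp e) (mt mm_prep2_iff.mpr hne) p, .rfl⟩
  | down e q ih =>
    rintro a c rfl rfl
    obtain ⟨b, rfl⟩ := e.mem_range_prep2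
    obtain ⟨p, hp⟩ := ih b c rfl rfl
    obtain rfl := eq_of_heq hp
    exact ⟨.down (mm_prep2_iff.mp e) p, .rfl⟩

lemma lift_surjective {a b : Word} : Function.Surjective (lift : GPath m a b → _) := fun q =>
  (exists_lift_heq q a b rfl rfl).imp fun _ => eq_of_heq

end GPath

lemma critW_add_two (m a : ℕ) : critW (m + 2) (a + 2) = prep2 (critW m a) := by
  funext i
  rcases i with _ | _ | i <;> simp [critW, prep2]

lemma card_filter_prep2 (m : ℕ) (w : Word) (s : Sym) :
    ((Finset.range (m + 2)).filter fun i => prep2 w i = s).card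
      = ((Finset.range m).filter fun i => w i = s).card + if s = om then 2 else 0 := by
  rw [Finset.card_filter, Finset.card_filter, Finset.sum_range_succ', Finset.sum_range_succ']
  cases s <;> simp [prep2]

lemma qsh_prep2 (m : ℕ) (w : Word) : qsh (m + 2) (prep2 w) = qsh m w - 2 := by
  simp only [qsh, card_filter_prep2, if_pos, reduceCtorEq, if_false]
  push_cast
  ring

open CategoryTheory

universe v u

section Morse

variable {𝒞 : Type u} [Category.{v} 𝒞] {m : ℕ} {cell : Word → 𝒞}
  {dv : ∀ a b : Word, cell (prep2 a) ⟶ cell (prep2 b)}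
  {gv : ∀ a b : Word, cell (prep2 b) ⟶ cell (prep2 a)}
  {dv2 : ∀ a b : Word, cell a ⟶ cell b} {gv2 : ∀ a b : Word, cell b ⟶ cell a}

lemma gv_prep2 (hd : ∀ a b, KEdge m a b → dv2 (prep2 a) (prep2 b) = dv a b)
    (hg : ∀ z x, MM m z x → dv z x ≫ gv z x = 𝟙 _)
    (hg2 : ∀ z x, MM (m + 2) z x → dv2 z x ≫ gv2 z x = 𝟙 _ ∧ gv2 z x ≫ dv2 z x = 𝟙 _)
    {z x : Word} (h : MM m z x) : gv2 (prep2 z) (prep2 x) = gv z x := by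
  have h2 := hg2 _ _ (mm_prep2_iff.mpr h)
  refine Iso.inv_ext (f := ⟨dv2 (prep2 z) (prep2 x), _, h2.1, h2.2⟩) ?_
  change dv2 (prep2 z) (prep2 x) ≫ gv z x = 𝟙 _
  rw [hd z x h.kEdge, hg z x h]

lemma pathHom_lift (hd : ∀ a b, KEdge m a b → dv2 (prep2 a) (prep2 b) = dv a b)
    (hgv : ∀ z x, MM m z x → gv2 (prep2 z) (prep2 x) = gv z x) {a b : Word} (p : GPath m a b) :
    pathHom cell dv2 gv2 (m + 2) p.lift = pathHom (fun w => cell (prep2 w)) dv gv m p := by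
  induction p with
  | nil a => rfl
  | up e _ _ ih => simp only [GPath.lift, pathHom, hd _ _ e, ih]
  | down e _ ih => simp only [GPath.lift, pathHom, hgv _ _ e, ih]

lemma mEntry_prep2 [Preadditive 𝒞] (hd : ∀ a b, KEdge m a b → dv2 (prep2 a) (prep2 b) = dv a b)
    (hgv : ∀ z x, MM m z x → gv2 (prep2 z) (prep2 x) = gv z x) (z x : Word) :
    mEntry cell dv2 gv2 (m + 2) (prep2 z) (prep2 x)
      = mEntry (fun w => cell (prep2 w)) dv gv m z x :=
  (finsum_eq_of_bijective GPath.lift ⟨GPath.lift_injective, GPath.lift_surjective⟩ fun p => by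
    rw [GPath.downs_lift, pathHom_lift hd hgv]).symm

end Morse

theorem stmt12 {𝒞 : Type u} [Category.{v} 𝒞] [Preadditive 𝒞] (m : ℕ)
    (cell cell2 : Word → 𝒞)
    (dv : ∀ a b : Word, (cell a ⟶ cell b)) (dv2 : ∀ a b : Word, (cell2 a ⟶ cell2 b))
    (gv : ∀ a b : Word, (cell b ⟶ cell a)) (gv2 : ∀ a b : Word, (cell2 b ⟶ cell2 a))
    -- matched arrows are isomorphisms, with inverses `gv`, `gv2`
    (hg : ∀ z x, MM m z x → dv z x ≫ gv z x = 𝟙 (cell z) ∧ gv z x ≫ dv z x = 𝟙 (cell x))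
    (hg2 : ∀ z x, MM (m + 2) z x →
      dv2 z x ≫ gv2 z x = 𝟙 (cell2 z) ∧ gv2 z x ≫ dv2 z x = 𝟙 (cell2 x))
    -- cells and matrix elements are invariant under prepending a full twist `11`
    (hcell : ∀ w : Word, cell2 (prep2 w) = cell w)
    (hd : ∀ a b, KEdge m a b →
      dv2 (prep2 a) (prep2 b) = eqToHom (hcell a) ≫ dv a b ≫ eqToHom (hcell b).symm) :
    -- conclusion: isomorphisms of the truncated Morse complexes
    ∃ ψ : ∀ a : ℕ, a ≤ m → (cell (critW m a) ≅ cell2 (critW (m + 2) (a + 2))),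
      (∀ a (h : a + 1 ≤ m),
        mEntry cell dv gv m (critW m a) (critW m (a + 1)) ≫ (ψ (a + 1) h).hom
          = (ψ a (by omega)).hom ≫
            mEntry cell2 dv2 gv2 (m + 2) (critW (m + 2) (a + 2)) (critW (m + 2) (a + 3)))
      ∧ ∀ a, a ≤ m → qsh (m + 2) (critW (m + 2) (a + 2)) + 2 = qsh m (critW m a) := by
  obtain rfl : cell = fun w => cell2 (prep2 w) := funext fun w => (hcell w).symm
  simp only [eqToHom_refl, Category.id_comp, Category.comp_id] at hd
  have hgv : ∀ z x, MM m z x → gv2 (prep2 z) (prep2 x) = gv z x :=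
    fun _ _ => gv_prep2 hd (fun z x h => (hg z x h).1) hg2
  refine ⟨fun a _ => eqToIso (congrArg cell2 (critW_add_two m a).symm), fun a _ => ?_,
    fun a _ => by rw [critW_add_two, qsh_prep2]; ring⟩
  -- generalizing the target words turns the transports `ψ` into identities
  suffices ∀ u v (hu : prep2 (critW m a) = u) (hv : prep2 (critW m (a + 1)) = v),
      mEntry _ dv gv m (critW m a) (critW m (a + 1)) ≫ eqToHom (congrArg cell2 hv)
        = eqToHom (congrArg cell2 hu) ≫ mEntry cell2 dv2 gv2 (m + 2) u v from
    this _ _ (critW_add_two m a).symm (critW_add_two m (a + 1)).symm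
  rintro _ _ rfl rfl
  simp [mEntry_prep2 hd hgv]

end Stmt12
end
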